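/- arXiv:2011.09640 — 8 statements merged into one kernel-verified Lean document; each statement's English description precedes it below -/
import Mathlib

section
/- With q = 1-p and 1/2 < p < 1, the willingness to pay W(p,2n) = \sum_{k=n+1}^{2n} C(2n,k)(p^k q^{2n+1-k} - p^{2n+1-k} q^k) is strictly increasing in n: W(p, 2m) > W(p, 2n) whenever m > n ≥ 1. -/
/-!
Split `W` into two upper binomial tails and apply Pascal's rule twice to each: in any commutative
ring, `W(n + 1) = (p + q)² W(n) + (p - q) C(2n+1, n+1) (pq)^(n+1)`. For `q = 1 - p` the factor
`(p + q)²` is `1` and the increment is positive as soon as `1/2 < p < 1`.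
-/

open Finset

theorem Finset.sum_Icc_add_one_add_one {M : Type*} [AddCommMonoid M] (f : ℕ → M) (a b : ℕ) :
    ∑ k ∈ Icc (a + 1) (b + 1), f k = ∑ k ∈ Icc a b, f (k + 1) := by
  rw [← map_add_right_Icc, sum_map]
  rfl

section BinomialTail

variable {R : Type*} [CommRing R] (p q : R)

/-- `q` times the upper tail `∑_{j ≤ k ≤ N} C(N,k) p^k q^(N-k)`; the extra factor `q` keeps every
exponent of `q` below free of truncated subtraction. -/
noncomputable def upperTail (N j : ℕ) : R :=
  ∑ k ∈ Icc j N, (N.choose k : R) * (p ^ k * q ^ (N + 1 - k))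

theorem upperTail_eq_add_upperTail_succ (N j : ℕ) :
    upperTail p q N j = N.choose j * (p ^ j * q ^ (N + 1 - j)) + upperTail p q N (j + 1) := by
  rcases le_or_gt j N with h | h
  · rw [upperTail, upperTail, Icc_eq_cons_Ioc h, sum_cons, Icc_add_one_left_eq_Ioc]
  · simp [upperTail, Nat.choose_eq_zero_of_lt h, h, Icc_eq_empty_of_lt, Nat.lt_succ_of_lt h]

theorem upperTail_succ_succ (N j : ℕ) :
    upperTail p q (N + 1) (j + 1)
      = (p + q) * upperTail p q N (j + 1) + N.choose j * (p ^ (j + 1) * q ^ (N + 1 - j)) := by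
  have pascal : upperTail p q (N + 1) (j + 1)
      = p * upperTail p q N j
        + ∑ k ∈ Icc (j + 1) (N + 1), (N.choose k : R) * (p ^ k * q ^ (N + 1 + 1 - k)) := by
    rw [upperTail, upperTail, sum_Icc_add_one_add_one, sum_Icc_add_one_add_one, mul_sum,
      ← sum_add_distrib]
    refine sum_congr rfl fun k _ => ?_
    rw [Nat.choose_succ_succ', Nat.add_sub_add_right]
    push_cast
    ring
  have top : ∑ k ∈ Icc (j + 1) (N + 1), (N.choose k : R) * (p ^ k * q ^ (N + 1 + 1 - k))
      = q * upperTail p q N (j + 1) := by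
    rcases le_or_gt (j + 1) (N + 1) with h | h
    · rw [sum_Icc_succ_top h, Nat.choose_succ_self, upperTail, mul_sum]
      simp only [Nat.cast_zero, zero_mul, add_zero]
      refine sum_congr rfl fun k hk => ?_
      rw [show N + 1 + 1 - k = N + 1 - k + 1 by grind]
      ring
    · simp [upperTail, Icc_eq_empty_of_lt, h, Nat.lt_of_succ_lt h]
  rw [pascal, top, upperTail_eq_add_upperTail_succ p q N j]
  ring

theorem upperTail_two_mul_succ (n : ℕ) :
    upperTail p q (2 * (n + 1)) (n + 1 + 1)
      = (p + q) ^ 2 * upperTail p q (2 * n) (n + 1)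
        + (p * q) ^ (n + 1) * ((2 * n).choose n * p - (2 * n).choose (n + 1) * q) := by
  rw [show 2 * (n + 1) = 2 * n + 1 + 1 by ring, upperTail_succ_succ, upperTail_succ_succ,
    upperTail_eq_add_upperTail_succ p q (2 * n) (n + 1), Nat.choose_succ_succ',
    show 2 * n + 1 + 1 - (n + 1) = n + 1 by omega, show 2 * n + 1 - (n + 1) = n by omega]
  push_cast
  ring

/-- `willingnessToPay p (1 - p) n` is `W(p, 2n)`. -/
noncomputable def willingnessToPay (n : ℕ) : R :=
  ∑ k ∈ Icc (n + 1) (2 * n),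
    ((2 * n).choose k : R) * (p ^ k * q ^ (2 * n + 1 - k) - p ^ (2 * n + 1 - k) * q ^ k)

theorem willingnessToPay_eq_sub (n : ℕ) :
    willingnessToPay p q n = upperTail p q (2 * n) (n + 1) - upperTail q p (2 * n) (n + 1) := by
  rw [willingnessToPay, upperTail, upperTail, ← sum_sub_distrib]
  exact sum_congr rfl fun k _ => by ring

theorem willingnessToPay_succ (n : ℕ) :
    willingnessToPay p q (n + 1)
      = (p + q) ^ 2 * willingnessToPay p q n
        + (p - q) * (2 * n + 1).choose (n + 1) * (p * q) ^ (n + 1) := by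
  simp only [willingnessToPay_eq_sub, upperTail_two_mul_succ, Nat.choose_succ_succ']
  push_cast
  ring

end BinomialTail

theorem willingnessToPay_lt_succ {p : ℝ} (hp : 1 / 2 < p) (hp1 : p < 1) (n : ℕ) :
    willingnessToPay p (1 - p) n < willingnessToPay p (1 - p) (n + 1) := by
  have hpq : 0 < p * (1 - p) := mul_pos (by linarith) (by linarith)
  have hchoose : (0 : ℝ) < (2 * n + 1).choose (n + 1) := Nat.cast_pos.2 (Nat.choose_pos (by omega))
  have hgain := mul_pos (mul_pos (by linarith : 0 < p - (1 - p)) hchoose) (pow_pos hpq (n + 1))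
  rw [willingnessToPay_succ, add_sub_cancel, one_pow, one_mul]
  linarith

theorem stmt_2_general (p : ℝ) (hp : 1/2 < p) (hp1 : p < 1) (m n : ℕ) (hmn : n < m) :
    (∑ k ∈ Finset.Icc (n+1) (2*n),
      (Nat.choose (2*n) k : ℝ) *
        (p ^ k * (1-p) ^ (2*n+1-k) - p ^ (2*n+1-k) * (1-p) ^ k))
    < ∑ k ∈ Finset.Icc (m+1) (2*m),
      (Nat.choose (2*m) k : ℝ) *
        (p ^ k * (1-p) ^ (2*m+1-k) - p ^ (2*m+1-k) * (1-p) ^ k) :=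
  strictMono_nat_of_lt_succ (willingnessToPay_lt_succ hp hp1) hmn

/-- `W(p,2n)` is strictly increasing in `n`: `W(p,2m) > W(p,2n)` whenever `m > n ≥ 1`. -/
theorem stmt_2 (p : ℝ) (hp : 1/2 < p) (hp1 : p < 1) (m n : ℕ) (hn : 1 ≤ n) (hmn : n < m) :
    (∑ k ∈ Finset.Icc (n+1) (2*n),
      (Nat.choose (2*n) k : ℝ) *
        (p ^ k * (1-p) ^ (2*n+1-k) - p ^ (2*n+1-k) * (1-p) ^ k))
    < ∑ k ∈ Finset.Icc (m+1) (2*m),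
      (Nat.choose (2*m) k : ℝ) *
        (p ^ k * (1-p) ^ (2*m+1-k) - p ^ (2*m+1-k) * (1-p) ^ k) :=
  stmt_2_general p hp hp1 m n hmn
end

section
/- The threshold p*_{2n} = 1/2 + (1/2)·√(1 - ((2·4···(2n))/(3·5···(2n+1)))^{1/n}) is strictly decreasing in n and converges to 1/2 as n → ∞. -/
/-!
Writing `a k = 2k/(2k+1)`, the quantity `r_n^{1/n}` is the geometric mean of `a 1, …, a n`.
Since `a` is strictly increasing, so is the running average of `log a`, hence so is
`r_n^{1/n}`, and `p*_{2n}` decreases. For the limit, `a k ≥ k/(k+1)` telescopes to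
`r_n ≥ 1/(n+1)`, and `(n+1)^{-1/n} → 1` squeezes `r_n^{1/n}` to `1`.
-/

open Real Filter Finset Topology

/-- The ratio `r_n = ∏_{k=1}^n (2k)/(2k+1)`. -/
noncomputable def rRatio (n : ℕ) : ℝ :=
  ∏ k ∈ Finset.Icc 1 n, ((2*k : ℝ) / (2*k + 1))

/-- The optimal signal quality `p*_{2n} = 1/2 + (1/2)√(1 - r_n^{1/n})`. -/
noncomputable def pStar (n : ℕ) : ℝ :=
  1/2 + (1/2) * Real.sqrt (1 - (rRatio n) ^ ((n : ℝ)⁻¹))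

section RunningAverage

variable {f : ℕ → ℝ}

theorem sum_Icc_lt_mul_of_strictMonoOn (hf : StrictMonoOn f (Set.Ici 1)) {n : ℕ} (hn : 1 ≤ n) :
    ∑ k ∈ Icc 1 n, f k < n * f (n + 1) :=
  calc ∑ k ∈ Icc 1 n, f k < ∑ _k ∈ Icc 1 n, f (n + 1) :=
        sum_lt_sum_of_nonempty (nonempty_Icc.2 hn) fun k hk => by
          obtain ⟨hk1, hkn⟩ := mem_Icc.1 hk
          exact hf (Set.mem_Ici.2 hk1) (Set.mem_Ici.2 (by omega)) (by omega)
    _ = n * f (n + 1) := by simp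

theorem strictMonoOn_sum_Icc_div (hf : StrictMonoOn f (Set.Ici 1)) :
    StrictMonoOn (fun n : ℕ => (∑ k ∈ Icc 1 n, f k) / n) (Set.Ici 1) := by
  refine strictMonoOn_of_lt_add_one Set.ordConnected_Ici fun n _ hn _ => ?_
  have hlt := sum_Icc_lt_mul_of_strictMonoOn hf hn
  have hn' : (0 : ℝ) < n := by exact_mod_cast hn
  rw [sum_Icc_succ_top (by omega), div_lt_div_iff₀ hn' (by positivity)]
  push_cast
  nlinarith

theorem strictMonoOn_prod_Icc_rpow_inv {a : ℕ → ℝ} (ha_pos : ∀ k ∈ Set.Ici 1, 0 < a k)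
    (ha : StrictMonoOn a (Set.Ici 1)) :
    StrictMonoOn (fun n : ℕ => (∏ k ∈ Icc 1 n, a k) ^ (n : ℝ)⁻¹) (Set.Ici 1) := by
  have hlog : StrictMonoOn (fun k => log (a k)) (Set.Ici 1) := fun i hi j hj hij =>
    log_lt_log (ha_pos i hi) (ha hi hj hij)
  have ha_pos' : ∀ n, ∀ k ∈ Icc 1 n, 0 < a k := fun n k hk => ha_pos k (mem_Icc.1 hk).1
  have hexp : ∀ n : ℕ,
      (∏ k ∈ Icc 1 n, a k) ^ (n : ℝ)⁻¹ = exp ((∑ k ∈ Icc 1 n, log (a k)) / n) := fun n => by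
    rw [rpow_def_of_pos (prod_pos (ha_pos' n)),
      log_prod fun k hk => (ha_pos' n k hk).ne', div_eq_mul_inv]
  intro i hi j hj hij
  simp only [hexp]
  exact exp_lt_exp.2 (strictMonoOn_sum_Icc_div hlog hi hj hij)

end RunningAverage

theorem strictMono_two_mul_div_two_mul_add_one :
    StrictMono fun k : ℕ => (2 * k : ℝ) / (2 * k + 1) := by
  intro i j hij
  have hij' : (i : ℝ) < j := by exact_mod_cast hij
  rw [div_lt_div_iff₀ (by positivity) (by positivity)]
  nlinarith

theorem rRatio_pos (n : ℕ) : 0 < rRatio n :=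
  prod_pos fun k hk => by
    have : (1 : ℝ) ≤ k := by exact_mod_cast (mem_Icc.1 hk).1
    positivity

theorem rRatio_le_one (n : ℕ) : rRatio n ≤ 1 :=
  prod_le_one (fun _ _ => by positivity) fun _ _ => by
    rw [div_le_one (by positivity)]
    linarith

theorem inv_succ_le_rRatio (n : ℕ) : ((n : ℝ) + 1)⁻¹ ≤ rRatio n := by
  induction n with
  | zero => simp [rRatio]
  | succ n ih =>
    have hfactor : ((n : ℝ) + 1 + 1)⁻¹ ≤ ((n : ℝ) + 1)⁻¹ * ((2 * (n + 1)) / (2 * (n + 1) + 1)) := by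
      have hsimp : ((n : ℝ) + 1)⁻¹ * ((2 * (n + 1)) / (2 * (n + 1) + 1)) = 2 / (2 * n + 3) := by
        field_simp
        ring
      rw [hsimp, inv_eq_one_div, div_le_div_iff₀ (by positivity) (by positivity)]
      linarith
    rw [rRatio, prod_Icc_succ_top (by omega), ← rRatio]
    push_cast
    exact hfactor.trans (by gcongr)

theorem rRatio_rpow_inv_strictMonoOn :
    StrictMonoOn (fun n : ℕ => rRatio n ^ (n : ℝ)⁻¹) (Set.Ici 1) :=
  strictMonoOn_prod_Icc_rpow_inv
    (fun k hk => by
      have : (1 : ℝ) ≤ k := by exact_mod_cast Set.mem_Ici.1 hk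
      positivity)
    (strictMono_two_mul_div_two_mul_add_one.strictMonoOn _)

theorem rRatio_rpow_inv_le_one (n : ℕ) : rRatio n ^ (n : ℝ)⁻¹ ≤ 1 :=
  rpow_le_one (rRatio_pos n).le (rRatio_le_one n) (by positivity)

theorem tendsto_inv_succ_rpow_inv :
    Tendsto (fun n : ℕ => ((n : ℝ) + 1)⁻¹ ^ (n : ℝ)⁻¹) atTop (𝓝 1) := by
  have h := (tendsto_rpow_div_mul_add (-1) 1 (-1) zero_ne_one).comp
    (tendsto_atTop_add_const_right atTop (1 : ℝ) tendsto_natCast_atTop_atTop)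
  refine h.congr fun n => ?_
  rw [Function.comp_apply, inv_rpow (by positivity), ← rpow_neg (by positivity)]
  congr 1
  ring

theorem tendsto_rRatio_rpow_inv : Tendsto (fun n : ℕ => rRatio n ^ (n : ℝ)⁻¹) atTop (𝓝 1) :=
  tendsto_of_tendsto_of_tendsto_of_le_of_le tendsto_inv_succ_rpow_inv tendsto_const_nhds
    (fun n => rpow_le_rpow (by positivity) (inv_succ_le_rRatio n) (by positivity))
    rRatio_rpow_inv_le_one

/-- `p*_{2n}` is strictly decreasing in `n` (for `n ≥ 1`) and converges to `1/2`. -/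
theorem stmt_6 :
    (∀ m n : ℕ, 1 ≤ n → n < m → pStar m < pStar n) ∧
    Filter.Tendsto pStar Filter.atTop (nhds (1/2)) := by
  constructor
  · intro m n hn hnm
    have hq := rRatio_rpow_inv_strictMonoOn hn (Set.mem_Ici.2 (hn.trans hnm.le)) hnm
    unfold pStar
    gcongr
    linarith [rRatio_rpow_inv_le_one m]
  · have h : Tendsto pStar atTop (𝓝 (1 / 2 + 1 / 2 * √(1 - 1))) :=
      ((tendsto_const_nhds.sub tendsto_rRatio_rpow_inv).sqrt.const_mul _).const_add _
    simpa using h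
end

section
/- Fix γ > 0 and u ∈ (1/2, 1). For T_p ~ Beta(p/γ, (1-p)/γ), the probability P(max(T_p, 1−T_p) ≤ u) = I_u(p/γ,(1-p)/γ) − I_{1−u}(p/γ,(1-p)/γ) is strictly decreasing in p for p ∈ (1/2, 1). -/
/-- Density of the `Beta(a,b)` distribution on `(0,1)`. -/
noncomputable def betaPdf (a b t : ℝ) : ℝ :=
  if t ∈ Set.Ioo (0:ℝ) 1 then
    t ^ (a - 1) * (1 - t) ^ (b - 1) /
      ∫ s in (0:ℝ)..1, s ^ (a - 1) * (1 - s) ^ (b - 1)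
  else 0

/-- The `Beta(a,b)` probability measure on `ℝ`. -/
noncomputable def betaMeasure (a b : ℝ) : MeasureTheory.Measure ℝ :=
  MeasureTheory.volume.withDensity fun t => ENNReal.ofReal (betaPdf a b t)

/-- The (unregularized) incomplete beta function `∫_0^z t^{a-1}(1-t)^{b-1} dt`. -/
noncomputable def incBeta (z a b : ℝ) : ℝ :=
  ∫ t in (0:ℝ)..z, t ^ (a - 1) * (1 - t) ^ (b - 1)

/-- The regularized incomplete beta function `I_z(a,b)`. -/
noncomputable def regIncBeta (z a b : ℝ) : ℝ :=
  incBeta z a b / incBeta 1 a b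

open Real MeasureTheory Set intervalIntegral

noncomputable def bfn (a b : ℝ) : ℝ → ℝ := fun t => t ^ (a-1) * (1-t) ^ (b-1)
noncomputable def hfn (a b : ℝ) : ℝ → ℝ := fun t => bfn a b t + bfn b a t


lemma cosh_diff (s d : ℝ) : Real.cosh (s + d) - Real.cosh (s - d) = 2 * Real.sinh s * Real.sinh d := by
  rw [Real.cosh_add, Real.cosh_sub]; ring

lemma cosh_sub_cosh' (x y : ℝ) :
    Real.cosh x - Real.cosh y = 2 * Real.sinh ((x+y)/2) * Real.sinh ((x-y)/2) := by
  have h := cosh_diff ((x+y)/2) ((x-y)/2)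
  rw [show (x+y)/2 + (x-y)/2 = x by ring, show (x+y)/2 - (x-y)/2 = y by ring] at h
  exact h

lemma cosh_prod (A B : ℝ) : Real.cosh A * Real.cosh B = (Real.cosh (A+B) + Real.cosh (A-B))/2 := by
  rw [Real.cosh_add, Real.cosh_sub]; ring

lemma cosh_cross {c1 c2 L M : ℝ} (hc1 : 0 < c1) (hc : c1 < c2) (hL : 0 ≤ L) (hM : L < M) :
    Real.cosh (c2*L) * Real.cosh (c1*M) < Real.cosh (c1*L) * Real.cosh (c2*M) := by
  rw [cosh_prod, cosh_prod]
  have T1 : Real.cosh (c1*L + c2*M) - Real.cosh (c2*L + c1*M) > 0 := by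
    rw [cosh_sub_cosh']
    have h1 : 0 < Real.sinh ((c1*L + c2*M + (c2*L + c1*M))/2) := by
      apply Real.sinh_pos_iff.2; nlinarith
    have h2 : 0 < Real.sinh ((c1*L + c2*M - (c2*L + c1*M))/2) := by
      apply Real.sinh_pos_iff.2; nlinarith
    positivity
  have T2 : Real.cosh (c1*L - c2*M) - Real.cosh (c2*L - c1*M) > 0 := by
    rw [cosh_sub_cosh']
    have h1 : Real.sinh ((c1*L - c2*M + (c2*L - c1*M))/2) < 0 := by
      apply Real.sinh_neg_iff.2; nlinarith
    have h2 : Real.sinh ((c1*L - c2*M - (c2*L - c1*M))/2) < 0 := by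
      apply Real.sinh_neg_iff.2; nlinarith
    nlinarith
  linarith


lemma bfn_meas (a b : ℝ) : Measurable (fun t : ℝ => t ^ (a-1) * (1-t) ^ (b-1)) :=
  (measurable_id.pow measurable_const).mul ((measurable_const.sub measurable_id).pow measurable_const)

lemma II_left {a : ℝ} (ha : 0 < a) (b : ℝ) :
    IntervalIntegrable (fun t : ℝ => t ^ (a-1) * (1-t) ^ (b-1)) volume 0 (1/2) := by
  set C : ℝ := max 1 ((1/2 : ℝ) ^ (b-1)) with hC
  have hint : IntervalIntegrable (fun t : ℝ => t ^ (a-1) * C) volume 0 (1/2) :=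
    (intervalIntegrable_rpow' (by linarith)).mul_const C
  apply hint.mono_fun ((bfn_meas a b).aestronglyMeasurable)
  rw [Filter.EventuallyLE, ae_restrict_iff' measurableSet_uIoc]
  filter_upwards with t ht
  rw [Set.uIoc_of_le (by norm_num : (0:ℝ) ≤ 1/2)] at ht
  obtain ⟨ht0, ht1⟩ := ht
  have h1t : (1:ℝ)/2 ≤ 1 - t := by linarith
  have h1t' : (1:ℝ) - t ≤ 1 := by linarith
  have hb1 : (1-t) ^ (b-1) ≤ C := by
    rcases le_or_gt 1 b with hb | hb
    · exact le_max_of_le_left (Real.rpow_le_one (by linarith) h1t' (by linarith))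
    · exact le_max_of_le_right (Real.rpow_le_rpow_of_nonpos (by norm_num) h1t (by linarith))
  have hpos : (0:ℝ) ≤ t ^ (a-1) := Real.rpow_nonneg ht0.le _
  have hpos2 : (0:ℝ) ≤ (1-t) ^ (b-1) := Real.rpow_nonneg (by linarith) _
  simp only [Real.norm_eq_abs, abs_of_nonneg (mul_nonneg hpos hpos2),
    abs_of_nonneg (mul_nonneg hpos (le_trans hpos2 hb1))]
  exact mul_le_mul_of_nonneg_left hb1 hpos

lemma II_full {a b : ℝ} (ha : 0 < a) (hb : 0 < b) :
    IntervalIntegrable (fun t : ℝ => t ^ (a-1) * (1-t) ^ (b-1)) volume 0 1 := by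
  apply (II_left ha b).trans
  have h := (II_left hb a).comp_sub_left 1
  norm_num at h
  have e : (fun x : ℝ => (1-x) ^ (b-1) * x ^ (a-1))
       = fun x : ℝ => x ^ (a-1) * (1-x) ^ (b-1) := by
    funext x; ring
  rw [e] at h
  exact h.symm

lemma II_full' {a b : ℝ} (ha : 0 < a) (hb : 0 < b) :
    IntervalIntegrable (bfn a b) MeasureTheory.volume 0 1 := II_full ha hb

lemma bfn_pos {a b t : ℝ} (ht : t ∈ Set.Ioo (0:ℝ) 1) : 0 < t ^ (a-1) * (1-t) ^ (b-1) :=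
  mul_pos (Real.rpow_pos_of_pos ht.1 _) (Real.rpow_pos_of_pos (by linarith [ht.2]) _)

lemma incBeta_pos {z a b : ℝ} (hz : 0 < z) (hz1 : z ≤ 1) (ha : 0 < a) (hb : 0 < b) :
    0 < incBeta z a b := by
  have hsub : Set.uIcc (0:ℝ) z ⊆ Set.uIcc (0:ℝ) 1 := by
    rw [Set.uIcc_of_le hz.le, Set.uIcc_of_le zero_le_one]
    exact Set.Icc_subset_Icc le_rfl hz1
  apply intervalIntegral.intervalIntegral_pos_of_pos_on ((II_full ha hb).mono_set hsub)
  · intro x hx; exact bfn_pos ⟨hx.1, lt_of_lt_of_le hx.2 hz1⟩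
  · exact hz

lemma betaPdf_nonneg {a b : ℝ} (ha : 0 < a) (hb : 0 < b) (t : ℝ) : 0 ≤ betaPdf a b t := by
  unfold betaPdf
  split_ifs with h
  · exact div_nonneg (bfn_pos h).le (incBeta_pos one_pos le_rfl ha hb).le
  · exact le_rfl

lemma betaPdf_meas (a b : ℝ) : Measurable (betaPdf a b) :=
  Measurable.ite measurableSet_Ioo ((bfn_meas a b).div_const _) measurable_const

/-- Part 1 computation. -/
lemma part1 {γ u p : ℝ} (hγ : 0 < γ) (hu : u ∈ Set.Ioo (1/2:ℝ) 1) (hp : p ∈ Set.Ioo (0:ℝ) 1) :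
    ((betaMeasure (p/γ) ((1-p)/γ)) {t : ℝ | max t (1 - t) ≤ u}).toReal
      = regIncBeta u (p/γ) ((1-p)/γ) - regIncBeta (1-u) (p/γ) ((1-p)/γ) := by
  obtain ⟨hu2, hu1⟩ := hu
  obtain ⟨hp0, hp1⟩ := hp
  set a := p/γ with ha'
  set b := (1-p)/γ with hb'
  have ha : 0 < a := div_pos hp0 hγ
  have hb : 0 < b := div_pos (by linarith) hγ
  have hZ : 0 < incBeta 1 a b := incBeta_pos one_pos le_rfl ha hb
  have hSet : {t : ℝ | max t (1 - t) ≤ u} = Set.Icc (1-u) u := by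
    ext t; simp only [Set.mem_setOf_eq, max_le_iff, Set.mem_Icc]
    constructor <;> rintro ⟨h1, h2⟩ <;> constructor <;> linarith
  rw [hSet, betaMeasure, withDensity_apply _ measurableSet_Icc]
  rw [← integral_eq_lintegral_of_nonneg_ae
      (Filter.Eventually.of_forall fun t => betaPdf_nonneg ha hb t)
      ((betaPdf_meas a b).aestronglyMeasurable)]
  have hIccIoo : Set.Icc (1-u) u ⊆ Set.Ioo (0:ℝ) 1 := fun t ht =>
    ⟨by linarith [ht.1], by linarith [ht.2]⟩
  have e1 : (∫ t in Set.Icc (1-u) u, betaPdf a b t)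
      = ∫ t in Set.Icc (1-u) u, (t ^ (a-1) * (1-t) ^ (b-1)) / incBeta 1 a b :=
    setIntegral_congr_fun measurableSet_Icc (fun t ht => if_pos (hIccIoo ht))
  rw [e1]
  rw [integral_Icc_eq_integral_Ioc, ← intervalIntegral.integral_of_le (by linarith : 1-u ≤ u)]
  rw [intervalIntegral.integral_div]
  have hII_u : IntervalIntegrable (fun t : ℝ => t ^ (a-1) * (1-t) ^ (b-1)) volume 0 u :=
    (II_full ha hb).mono_set (by rw [Set.uIcc_of_le, Set.uIcc_of_le] <;> first
      | exact Set.Icc_subset_Icc le_rfl hu1.le | linarith)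
  have hII_1u : IntervalIntegrable (fun t : ℝ => t ^ (a-1) * (1-t) ^ (b-1)) volume 0 (1-u) :=
    (II_full ha hb).mono_set (by rw [Set.uIcc_of_le, Set.uIcc_of_le] <;> first
      | exact Set.Icc_subset_Icc le_rfl (by linarith) | linarith)
  have key : (∫ t in (1-u)..u, t ^ (a-1) * (1-t) ^ (b-1)) = incBeta u a b - incBeta (1-u) a b :=
    (intervalIntegral.integral_interval_sub_left hII_u hII_1u).symm
  rw [key, regIncBeta, regIncBeta, sub_div]

lemma exp_comb (X Y k c : ℝ) :
    Real.exp (X*(k+c) + Y*(k-c)) + Real.exp (X*(k-c) + Y*(k+c))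
      = Real.exp (k*(X+Y)) * (2 * Real.cosh (c*(X-Y))) := by
  rw [Real.cosh_eq]
  rw [show Real.exp (k*(X+Y)) * (2 * ((Real.exp (c*(X-Y)) + Real.exp (-(c*(X-Y))))/2))
      = Real.exp (k*(X+Y)) * Real.exp (c*(X-Y)) + Real.exp (k*(X+Y)) * Real.exp (-(c*(X-Y)))
      from by ring]
  rw [← Real.exp_add, ← Real.exp_add]
  congr 1 <;> exact congrArg Real.exp (by ring)

lemma h_rep {γ p w : ℝ} (hγ : 0 < γ) (hw0 : 0 < w) (hw1 : w < 1) :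
    hfn (p/γ) ((1-p)/γ) w
      = Real.exp ((1/(2*γ) - 1) * (Real.log w + Real.log (1-w))) *
        (2 * Real.cosh (((2*p-1)/(2*γ)) * (Real.log w - Real.log (1-w)))) := by
  have h1w : (0:ℝ) < 1 - w := by linarith
  have hγ' : γ ≠ 0 := ne_of_gt hγ
  unfold hfn bfn
  rw [Real.rpow_def_of_pos hw0, Real.rpow_def_of_pos h1w, Real.rpow_def_of_pos hw0,
      Real.rpow_def_of_pos h1w, ← Real.exp_add, ← Real.exp_add]
  set X := Real.log w
  set Y := Real.log (1-w)
  set k : ℝ := 1/(2*γ) - 1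
  set c : ℝ := (2*p-1)/(2*γ)
  have e1 : X * (p/γ - 1) + Y * ((1-p)/γ - 1) = X*(k+c) + Y*(k-c) := by
    simp only [k, c]; field_simp; ring
  have e2 : X * ((1-p)/γ - 1) + Y * (p/γ - 1) = X*(k-c) + Y*(k+c) := by
    simp only [k, c]; field_simp; ring
  rw [e1, e2, exp_comb]

lemma hfn_pos {γ p w : ℝ} (hγ : 0 < γ) (hw0 : 0 < w) (hw1 : w < 1) :
    0 < hfn (p/γ) ((1-p)/γ) w := by
  rw [h_rep hγ hw0 hw1]
  positivity

lemma cross_K {γ p1 p2 s t : ℝ} (hγ : 0 < γ) (hp1 : 1/2 < p1) (hp12 : p1 < p2) (hp2 : p2 < 1)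
    (hs : 1/2 ≤ s) (hst : s < t) (ht1 : t < 1) :
    hfn (p2/γ) ((1-p2)/γ) s * hfn (p1/γ) ((1-p1)/γ) t
      < hfn (p1/γ) ((1-p1)/γ) s * hfn (p2/γ) ((1-p2)/γ) t := by
  have hs0 : (0:ℝ) < s := by linarith
  have hs1 : s < 1 := by linarith
  have ht0 : (0:ℝ) < t := by linarith
  rw [h_rep hγ hs0 hs1, h_rep hγ ht0 ht1, h_rep hγ hs0 hs1, h_rep hγ ht0 ht1]
  set Es := Real.exp ((1/(2*γ) - 1) * (Real.log s + Real.log (1-s)))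
  set Et := Real.exp ((1/(2*γ) - 1) * (Real.log t + Real.log (1-t)))
  set Ls := Real.log s - Real.log (1-s) with hLs
  set Lt := Real.log t - Real.log (1-t) with hLt
  set c1 : ℝ := (2*p1-1)/(2*γ)
  set c2 : ℝ := (2*p2-1)/(2*γ)
  have hc1 : 0 < c1 := div_pos (by linarith) (by linarith)
  have hc12 : c1 < c2 := by
    apply div_lt_div_of_pos_right (by linarith) (by linarith)
  have hLs0 : 0 ≤ Ls := by
    rw [hLs, sub_nonneg]
    exact Real.log_le_log (by linarith) (by linarith)
  have hLst : Ls < Lt := by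
    rw [hLs, hLt]
    have l1 : Real.log s < Real.log t := Real.log_lt_log hs0 hst
    have l2 : Real.log (1-t) < Real.log (1-s) := Real.log_lt_log (by linarith) (by linarith)
    linarith
  have key := cosh_cross hc1 hc12 hLs0 hLst
  have hEs : 0 < Es := Real.exp_pos _
  have hEt : 0 < Et := Real.exp_pos _
  nlinarith [mul_lt_mul_of_pos_left key (show 0 < 4*(Es*Et) by positivity)]

lemma II_sub {a b c d : ℝ} (ha : 0 < a) (hb : 0 < b) (h0 : 0 ≤ c) (hcd : c ≤ d) (h1 : d ≤ 1) :
    IntervalIntegrable (bfn a b) volume c d :=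
  (II_full' ha hb).mono_set
    (by rw [Set.uIcc_of_le hcd, Set.uIcc_of_le zero_le_one]; exact Set.Icc_subset_Icc h0 h1)

lemma II_hsub {a b c d : ℝ} (ha : 0 < a) (hb : 0 < b) (h0 : 0 ≤ c) (hcd : c ≤ d) (h1 : d ≤ 1) :
    IntervalIntegrable (hfn a b) volume c d :=
  (II_sub ha hb h0 hcd h1).add (II_sub hb ha h0 hcd h1)

lemma swap_int (a b A B : ℝ) :
    ∫ x in A..B, bfn b a x = ∫ x in (1-B)..(1-A), bfn a b x := by
  have e : (fun x : ℝ => bfn a b (1-x)) = bfn b a := by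
    funext x; unfold bfn; rw [sub_sub_cancel]; ring
  rw [← e, intervalIntegral.integral_comp_sub_left]

lemma repF {γ u p : ℝ} (hγ : 0 < γ) (hu : u ∈ Set.Ioo (1/2:ℝ) 1) (hp : p ∈ Set.Ioo (0:ℝ) 1) :
    regIncBeta u (p/γ) ((1-p)/γ) - regIncBeta (1-u) (p/γ) ((1-p)/γ)
      = (∫ t in (1/2:ℝ)..u, hfn (p/γ) ((1-p)/γ) t) /
        ((∫ t in (1/2:ℝ)..u, hfn (p/γ) ((1-p)/γ) t)
          + ∫ t in u..(1:ℝ), hfn (p/γ) ((1-p)/γ) t) := by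
  obtain ⟨hu2, hu1⟩ := hu
  obtain ⟨hp0, hp1⟩ := hp
  set a := p/γ with ha'
  set b := (1-p)/γ with hb'
  have ha : 0 < a := div_pos hp0 hγ
  have hb : 0 < b := div_pos (by linarith) hγ
  have h1u : (0:ℝ) < 1 - u := by linarith
  have hA : incBeta u a b - incBeta (1-u) a b = ∫ t in (1-u)..u, bfn a b t :=
    intervalIntegral.integral_interval_sub_left
      (II_sub ha hb le_rfl (by linarith) hu1.le)
      (II_sub ha hb le_rfl (by linarith) (by linarith))
  have step1 : (∫ t in (1-u)..u, bfn a b t) = ∫ t in (1/2:ℝ)..u, hfn a b t := by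
    have h1 : ∫ t in (1-u)..(1/2:ℝ), bfn a b t = ∫ t in (1/2:ℝ)..u, bfn b a t := by
      have h := swap_int a b (1/2) u
      rw [show (1:ℝ)-1/2 = 1/2 by norm_num] at h
      exact h.symm
    have h2 := intervalIntegral.integral_add_adjacent_intervals
      (II_sub ha hb h1u.le (by linarith) (by norm_num))
      (II_sub ha hb (by norm_num) hu2.le hu1.le)
    have h3 : (∫ t in (1/2:ℝ)..u, hfn a b t)
        = (∫ t in (1/2:ℝ)..u, bfn a b t) + ∫ t in (1/2:ℝ)..u, bfn b a t :=
      intervalIntegral.integral_add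
        (II_sub ha hb (by norm_num) hu2.le hu1.le)
        (II_sub hb ha (by norm_num) hu2.le hu1.le)
    linarith
  have step2 : incBeta 1 a b
      = (∫ t in (1-u)..u, bfn a b t) + ∫ t in u..(1:ℝ), hfn a b t := by
    have h1 : ∫ t in (0:ℝ)..(1-u), bfn a b t = ∫ t in u..(1:ℝ), bfn b a t := by
      have h := swap_int a b u 1
      rw [show (1:ℝ)-1 = 0 by norm_num] at h
      exact h.symm
    have h2 := intervalIntegral.integral_add_adjacent_intervals
      (II_sub ha hb le_rfl h1u.le (by linarith))
      (II_sub ha hb h1u.le (by linarith) hu1.le)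
    have h3 := intervalIntegral.integral_add_adjacent_intervals
      (II_sub ha hb le_rfl (by linarith : (0:ℝ) ≤ u) hu1.le)
      (II_sub ha hb (by linarith : (0:ℝ) ≤ u) hu1.le le_rfl)
    have h4 : (∫ t in u..(1:ℝ), hfn a b t)
        = (∫ t in u..(1:ℝ), bfn a b t) + ∫ t in u..(1:ℝ), bfn b a t :=
      intervalIntegral.integral_add
        (II_sub ha hb (by linarith) hu1.le le_rfl)
        (II_sub hb ha (by linarith) hu1.le le_rfl)
    have h5 : incBeta 1 a b = ∫ t in (0:ℝ)..(1:ℝ), bfn a b t := rfl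
    linarith
  rw [regIncBeta, regIncBeta, ← sub_div, hA, step2, step1]

theorem final (γ u : ℝ) (hγ : 0 < γ) (hu : u ∈ Set.Ioo (1/2:ℝ) 1) :
    StrictAntiOn
      (fun p : ℝ => regIncBeta u (p/γ) ((1-p)/γ) - regIncBeta (1-u) (p/γ) ((1-p)/γ))
      (Set.Ioo (1/2:ℝ) 1) := by
  obtain ⟨hu2, hu1⟩ := hu
  intro p1 hp1 p2 hp2 h12
  obtain ⟨hp1l, hp1r⟩ := hp1
  obtain ⟨hp2l, hp2r⟩ := hp2
  simp only
  rw [repF hγ ⟨hu2, hu1⟩ ⟨by linarith, hp1r⟩, repF hγ ⟨hu2, hu1⟩ ⟨by linarith, hp2r⟩]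
  set a1 := p1/γ; set b1 := (1-p1)/γ; set a2 := p2/γ; set b2 := (1-p2)/γ
  have ha1 : 0 < a1 := div_pos (by linarith) hγ
  have hb1 : 0 < b1 := div_pos (by linarith) hγ
  have ha2 : 0 < a2 := div_pos (by linarith) hγ
  have hb2 : 0 < b2 := div_pos (by linarith) hγ
  set P1 := ∫ t in (1/2:ℝ)..u, hfn a1 b1 t with hP1
  set Q1 := ∫ t in u..(1:ℝ), hfn a1 b1 t with hQ1
  set P2 := ∫ t in (1/2:ℝ)..u, hfn a2 b2 t with hP2
  set Q2 := ∫ t in u..(1:ℝ), hfn a2 b2 t with hQ2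
  have hIP1 := II_hsub ha1 hb1 (by norm_num) hu2.le hu1.le
  have hIP2 := II_hsub ha2 hb2 (by norm_num) hu2.le hu1.le
  have hIQ1 := II_hsub ha1 hb1 (by linarith : (0:ℝ) ≤ u) hu1.le le_rfl
  have hIQ2 := II_hsub ha2 hb2 (by linarith : (0:ℝ) ≤ u) hu1.le le_rfl
  have hposP1 : 0 < P1 := by
    apply intervalIntegral.intervalIntegral_pos_of_pos_on hIP1 _ hu2
    intro x hx; exact hfn_pos hγ (by linarith [hx.1]) (by linarith [hx.2])
  have hposP2 : 0 < P2 := by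
    apply intervalIntegral.intervalIntegral_pos_of_pos_on hIP2 _ hu2
    intro x hx; exact hfn_pos hγ (by linarith [hx.1]) (by linarith [hx.2])
  have hposQ1 : 0 < Q1 := by
    apply intervalIntegral.intervalIntegral_pos_of_pos_on hIQ1 _ hu1
    intro x hx; exact hfn_pos hγ (by linarith [hx.1]) hx.2
  have hposQ2 : 0 < Q2 := by
    apply intervalIntegral.intervalIntegral_pos_of_pos_on hIQ2 _ hu1
    intro x hx; exact hfn_pos hγ (by linarith [hx.1]) hx.2
  set α := hfn a1 b1 u with hα
  set β := hfn a2 b2 u with hβ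
  have hαpos : 0 < α := hfn_pos hγ (by linarith) hu1
  have hβpos : 0 < β := hfn_pos hγ (by linarith) hu1
  -- I1 : P2 * α < P1 * β
  have I1 : P2 * α < P1 * β := by
    have hpos : 0 < ∫ t in (1/2:ℝ)..u, (hfn a1 b1 t * β - hfn a2 b2 t * α) := by
      apply intervalIntegral.intervalIntegral_pos_of_pos_on
        ((hIP1.mul_const β).sub (hIP2.mul_const α)) _ hu2
      intro x hx
      have := cross_K hγ hp1l h12 hp2r (le_of_lt hx.1) hx.2 hu1
      linarith
    rw [intervalIntegral.integral_sub (hIP1.mul_const β) (hIP2.mul_const α),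
      intervalIntegral.integral_mul_const, intervalIntegral.integral_mul_const] at hpos
    linarith
  -- I2 : Q1 * β < Q2 * α
  have I2 : Q1 * β < Q2 * α := by
    have hpos : 0 < ∫ t in u..(1:ℝ), (hfn a2 b2 t * α - hfn a1 b1 t * β) := by
      apply intervalIntegral.intervalIntegral_pos_of_pos_on
        ((hIQ2.mul_const α).sub (hIQ1.mul_const β)) _ hu1
      intro x hx
      have := cross_K hγ hp1l h12 hp2r (by linarith : (1:ℝ)/2 ≤ u) hx.1 hx.2
      linarith
    rw [intervalIntegral.integral_sub (hIQ2.mul_const α) (hIQ1.mul_const β),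
      intervalIntegral.integral_mul_const, intervalIntegral.integral_mul_const] at hpos
    linarith
  rw [div_lt_div_iff₀ (by linarith) (by linarith)]
  nlinarith [mul_lt_mul_of_pos_right I1 hposQ2, mul_lt_mul_of_pos_right I2 hposP2, hβpos,
    mul_pos hposP1 hposQ2, mul_pos hposP2 hposQ1]

/-- For `T_p ~ Beta(p/γ,(1-p)/γ)` and fixed `u ∈ (1/2,1)`,
`P(max(T_p, 1-T_p) ≤ u) = I_u(p/γ,(1-p)/γ) - I_{1-u}(p/γ,(1-p)/γ)`, and this is strictly
decreasing in `p` on `(1/2,1)`. -/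
theorem stmt_11 (γ u : ℝ) (hγ : 0 < γ) (hu : u ∈ Set.Ioo (1/2:ℝ) 1) :
    (∀ p ∈ Set.Ioo (0:ℝ) 1,
      ((betaMeasure (p/γ) ((1-p)/γ)) {t : ℝ | max t (1 - t) ≤ u}).toReal
        = regIncBeta u (p/γ) ((1-p)/γ) - regIncBeta (1-u) (p/γ) ((1-p)/γ)) ∧
    StrictAntiOn
      (fun p : ℝ => regIncBeta u (p/γ) ((1-p)/γ) - regIncBeta (1-u) (p/γ) ((1-p)/γ))
      (Set.Ioo (1/2:ℝ) 1) := by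
  exact ⟨fun p hp => part1 hγ hu hp, final γ u hγ hu⟩
end

section
/- Fix γ > 0 and define v(p) = E[max(T_p, 1−T_p)] where T_p ~ Beta(p/γ, (1-p)/γ) for p ∈ (0,1). Then: (i) v(p) = v(1−p) for all p ∈ (0,1); (ii) v is strictly increasing on (1/2, 1). -/
namespace Stmt12Aux

open MeasureTheory Set Real
open scoped NNReal ENNReal

noncomputable def f (a b : ℝ) : ℝ → ℝ := fun t => t ^ (a-1) * (1-t) ^ (b-1)

lemma f_meas (a b : ℝ) : Measurable (f a b) :=
  (measurable_id.pow measurable_const).mul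
    ((measurable_const.sub measurable_id).pow measurable_const)

lemma f_nonneg {a b t : ℝ} (ht : t ∈ Ioo (0:ℝ) 1) : 0 ≤ f a b t :=
  mul_nonneg (rpow_nonneg ht.1.le _) (rpow_nonneg (by linarith [ht.2] : (0:ℝ) ≤ 1 - t) _)

lemma f_pos {a b t : ℝ} (ht : t ∈ Ioo (0:ℝ) 1) : 0 < f a b t :=
  mul_pos (rpow_pos_of_pos ht.1 _) (rpow_pos_of_pos (by linarith [ht.2] : (0:ℝ) < 1 - t) _)

lemma reflMP : MeasurePreserving (fun x : ℝ => 1 - x) volume volume :=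
  Measure.measurePreserving_sub_left volume 1

lemma reflEmb : MeasurableEmbedding (fun x : ℝ => 1 - x) :=
  (MeasurableEquiv.subLeft (1:ℝ)).measurableEmbedding

lemma refl_image : (fun x : ℝ => 1 - x) '' Ioo 0 1 = Ioo 0 1 := by
  rw [Set.image_const_sub_Ioo]; norm_num

lemma integral_refl (F : ℝ → ℝ) :
    ∫ t in Ioo (0:ℝ) 1, F (1 - t) = ∫ t in Ioo (0:ℝ) 1, F t := by
  have h := reflMP.setIntegral_image_emb reflEmb F (Ioo 0 1)
  rw [refl_image] at h
  exact h.symm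

lemma f_refl (a b : ℝ) : (fun t => f a b (1 - t)) = f b a := by
  funext t
  simp only [f, sub_sub_cancel]
  ring

lemma int_left {a b : ℝ} (ha : 0 < a) : IntegrableOn (f a b) (Ioo (0:ℝ) (2/3)) := by
  have hbase : IntegrableOn (fun t : ℝ => t ^ (a-1)) (Ioo (0:ℝ) (2/3)) :=
    (intervalIntegral.integrableOn_Ioo_rpow_iff (by norm_num)).2 (by linarith)
  refine Integrable.mono' (hbase.const_mul (Real.exp (|b-1| * Real.log 3)))
    ((f_meas a b).aestronglyMeasurable) ?_
  filter_upwards [ae_restrict_mem measurableSet_Ioo] with t ht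
  obtain ⟨h0, h1⟩ := ht
  have h1t : (0:ℝ) < 1 - t := by linarith
  have hnn : 0 ≤ f a b t := f_nonneg ⟨h0, by linarith⟩
  rw [Real.norm_of_nonneg hnn]
  have key : (1-t) ^ (b-1) ≤ Real.exp (|b-1| * Real.log 3) := by
    rw [Real.rpow_def_of_pos h1t]
    apply Real.exp_le_exp.2
    have hlog3 : |Real.log (1-t)| ≤ Real.log 3 := by
      rw [abs_le]
      constructor
      · have : Real.log (1/3 : ℝ) ≤ Real.log (1-t) :=
          Real.log_le_log (by norm_num) (by linarith)
        rw [Real.log_div one_ne_zero (by norm_num), Real.log_one] at this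
        linarith
      · have h4 : Real.log (1-t) ≤ Real.log 1 := Real.log_le_log h1t (by linarith)
        rw [Real.log_one] at h4
        have : (0:ℝ) ≤ Real.log 3 := Real.log_nonneg (by norm_num)
        linarith
    calc Real.log (1-t) * (b-1) ≤ |Real.log (1-t) * (b-1)| := le_abs_self _
      _ = |b-1| * |Real.log (1-t)| := by rw [abs_mul, mul_comm]
      _ ≤ |b-1| * Real.log 3 := mul_le_mul_of_nonneg_left hlog3 (abs_nonneg _)
  calc f a b t = t ^ (a-1) * (1-t)^(b-1) := rfl
    _ ≤ t ^ (a-1) * Real.exp (|b-1| * Real.log 3) :=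
        mul_le_mul_of_nonneg_left key (rpow_nonneg h0.le _)
    _ = Real.exp (|b-1| * Real.log 3) * t ^ (a-1) := mul_comm _ _

lemma int_f {a b : ℝ} (ha : 0 < a) (hb : 0 < b) : IntegrableOn (f a b) (Ioo (0:ℝ) 1) := by
  have h2 : IntegrableOn (fun t => f a b (1 - t)) (Ioo (0:ℝ) (2/3)) := by
    rw [f_refl]; exact int_left hb
  have h3 : IntegrableOn (f a b) ((fun x : ℝ => 1 - x) '' Ioo (0:ℝ) (2/3)) :=
    (reflMP.integrableOn_image reflEmb).2 h2
  have him : (fun x : ℝ => 1 - x) '' Ioo (0:ℝ) (2/3) = Ioo (1/3 : ℝ) 1 := by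
    rw [Set.image_const_sub_Ioo]; norm_num
  rw [him] at h3
  refine ((int_left ha).union h3).mono_set ?_
  intro t ht
  rcases lt_or_ge t (2/3) with h | h
  · exact Or.inl ⟨ht.1, h⟩
  · exact Or.inr ⟨by linarith, ht.2⟩

lemma int_hf {a b : ℝ} (ha : 0 < a) (hb : 0 < b) :
    IntegrableOn (fun t => max t (1-t) * f a b t) (Ioo (0:ℝ) 1) := by
  refine Integrable.mono' (int_f ha hb)
    (((measurable_id.max (measurable_const.sub measurable_id)).mul
      (f_meas a b)).aestronglyMeasurable) ?_
  filter_upwards [ae_restrict_mem measurableSet_Ioo] with t ht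
  have hfn := f_nonneg (a := a) (b := b) ht
  have hm0 : 0 ≤ max t (1-t) := le_trans ht.1.le (le_max_left _ _)
  have hm1 : max t (1-t) ≤ 1 := max_le ht.2.le (by linarith [ht.1])
  rw [Real.norm_of_nonneg (mul_nonneg hm0 hfn)]
  nlinarith

lemma B_pos {a b : ℝ} (ha : 0 < a) (hb : 0 < b) : 0 < ∫ t in Ioo (0:ℝ) 1, f a b t := by
  rw [integral_pos_iff_support_of_nonneg_ae]
  · have hsub : Ioo (0:ℝ) 1 ⊆ Function.support (f a b) := fun t ht => (f_pos ht).ne'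
    rw [Measure.restrict_apply' measurableSet_Ioo, Set.inter_eq_right.2 hsub,
      Real.volume_Ioo]
    norm_num
  · filter_upwards [ae_restrict_mem measurableSet_Ioo] with t ht using f_nonneg ht
  · exact int_f ha hb

lemma I_eq {a b : ℝ} :
    (∫ s in (0:ℝ)..1, s ^ (a - 1) * (1 - s) ^ (b - 1)) = ∫ t in Ioo (0:ℝ) 1, f a b t := by
  rw [intervalIntegral.integral_of_le zero_le_one, integral_Ioc_eq_integral_Ioo]
  rfl

lemma I_symm (a b : ℝ) :
    (∫ t in Ioo (0:ℝ) 1, f a b t) = ∫ t in Ioo (0:ℝ) 1, f b a t := by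
  rw [← integral_refl (f a b), f_refl]

lemma A_symm (a b : ℝ) :
    (∫ t in Ioo (0:ℝ) 1, max t (1-t) * f a b t)
      = ∫ t in Ioo (0:ℝ) 1, max t (1-t) * f b a t := by
  rw [← integral_refl (fun t => max t (1-t) * f a b t)]
  refine setIntegral_congr_fun measurableSet_Ioo fun t _ => ?_
  simp only [sub_sub_cancel, ← f_refl a b]
  rw [max_comm]

lemma pdf_eq (a b : ℝ) : betaPdf a b
    = fun t => (Ioo (0:ℝ) 1).indicator
        (fun t => f a b t / ∫ s in Ioo (0:ℝ) 1, f a b s) t := by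
  funext t
  rw [Set.indicator_apply]
  simp only [betaPdf, I_eq, f]

lemma pdf_nonneg {a b : ℝ} (ha : 0 < a) (hb : 0 < b) (t : ℝ) : 0 ≤ betaPdf a b t := by
  rw [pdf_eq]
  apply Set.indicator_nonneg
  intro x hx
  exact div_nonneg (f_nonneg hx) (B_pos ha hb).le

lemma pdf_meas (a b : ℝ) : Measurable (betaPdf a b) := by
  rw [pdf_eq]
  exact ((f_meas a b).div_const _).indicator measurableSet_Ioo

lemma v_eq {a b : ℝ} (ha : 0 < a) (hb : 0 < b) :
    (∫ t, max t (1-t) ∂(betaMeasure a b))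
      = (∫ t in Ioo (0:ℝ) 1, max t (1-t) * f a b t) / (∫ t in Ioo (0:ℝ) 1, f a b t) := by
  rw [betaMeasure]
  rw [show (fun t => ENNReal.ofReal (betaPdf a b t))
      = fun t => ((Real.toNNReal (betaPdf a b t) : ℝ≥0) : ℝ≥0∞) from rfl]
  rw [integral_withDensity_eq_integral_smul ((pdf_meas a b).real_toNNReal)]
  have : ∀ t : ℝ, (Real.toNNReal (betaPdf a b t) : ℝ≥0) • max t (1-t)
      = (Ioo (0:ℝ) 1).indicator
          (fun t => max t (1-t) * f a b t / ∫ s in Ioo (0:ℝ) 1, f a b s) t := by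
    intro t
    rw [NNReal.smul_def, Real.coe_toNNReal _ (pdf_nonneg ha hb t), pdf_eq]
    simp only [Set.indicator_apply]
    split_ifs with ht
    · rw [smul_eq_mul]; ring
    · rw [zero_smul]
  simp_rw [this]
  rw [integral_indicator measurableSet_Ioo, integral_div]

lemma two_cosh_mul (x y : ℝ) :
    2 * (Real.cosh x * Real.cosh y) = Real.cosh (x + y) + Real.cosh (x - y) := by
  rw [Real.cosh_add, Real.cosh_sub]; ring

lemma cosh_core {δ δ' z w : ℝ} (h0 : 0 < δ) (hδ : δ < δ') (h : |w| < |z|) :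
    Real.cosh (δ * z) * Real.cosh (δ' * w) < Real.cosh (δ' * z) * Real.cosh (δ * w) := by
  have h0' : 0 < δ' := h0.trans hδ
  have key : ∀ (c : ℝ), 0 < c → Real.cosh (c * z) = Real.cosh (c * |z|) := by
    intro c hc
    rw [← Real.cosh_abs (c * z), abs_mul, abs_of_pos hc]
  have keyw : ∀ (c : ℝ), 0 < c → Real.cosh (c * w) = Real.cosh (c * |w|) := by
    intro c hc
    rw [← Real.cosh_abs (c * w), abs_mul, abs_of_pos hc]
  rw [key δ h0, key δ' h0', keyw δ h0, keyw δ' h0']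
  set Z := |z| with hZ
  set W := |w| with hW
  have hW0 : 0 ≤ W := abs_nonneg _
  have hWZ : W < Z := h
  have e1 := two_cosh_mul (δ * Z) (δ' * W)
  have e2 := two_cosh_mul (δ' * Z) (δ * W)
  have c1 : Real.cosh (δ * Z + δ' * W) < Real.cosh (δ' * Z + δ * W) := by
    rw [Real.cosh_lt_cosh]
    rw [abs_of_nonneg (by nlinarith), abs_of_nonneg (by nlinarith)]
    nlinarith
  have c2 : Real.cosh (δ * Z - δ' * W) < Real.cosh (δ' * Z - δ * W) := by
    rw [Real.cosh_lt_cosh]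
    have hpos : 0 < δ' * Z - δ * W := by nlinarith
    rw [abs_of_pos hpos, abs_lt]
    constructor <;> nlinarith
  nlinarith [e1, e2, c1, c2]

/-- logit -/
noncomputable def L (t : ℝ) : ℝ := Real.log (t / (1 - t))

lemma absL_eq {t : ℝ} (ht : t ∈ Ioo (0:ℝ) 1) :
    |L t| = Real.log (max t (1-t) / (1 - max t (1-t))) := by
  obtain ⟨h0, h1⟩ := ht
  have h1t : 0 < 1 - t := by linarith
  rcases le_or_gt (1/2 : ℝ) t with h | h
  · have hmax : max t (1-t) = t := max_eq_left (by linarith)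
    rw [hmax]
    have hnn : 0 ≤ L t := Real.log_nonneg ((one_le_div h1t).2 (by linarith))
    rw [abs_of_nonneg hnn, L]
  · have hmax : max t (1-t) = 1 - t := max_eq_right (by linarith : t ≤ 1 - t)
    rw [hmax, sub_sub_cancel]
    have hneg : L t < 0 := Real.log_neg (div_pos h0 h1t) ((div_lt_one h1t).2 (by linarith))
    rw [abs_of_neg hneg, L, ← Real.log_inv, inv_div]

lemma absL_lt_iff {t s : ℝ} (ht : t ∈ Ioo (0:ℝ) 1) (hs : s ∈ Ioo (0:ℝ) 1) :
    |L t| < |L s| ↔ max t (1-t) < max s (1-s) := by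
  rw [absL_eq ht, absL_eq hs]
  set u := max t (1-t) with hu
  set v := max s (1-s) with hv
  have hu0 : 0 < u := lt_of_lt_of_le ht.1 (le_max_left _ _)
  have hu1 : u < 1 := max_lt ht.2 (by linarith [ht.1])
  have hv0 : 0 < v := lt_of_lt_of_le hs.1 (le_max_left _ _)
  have hv1 : v < 1 := max_lt hs.2 (by linarith [hs.1])
  rw [Real.log_lt_log_iff (div_pos hu0 (by linarith)) (div_pos hv0 (by linarith))]
  rw [div_lt_div_iff₀ (by linarith) (by linarith)]
  constructor <;> intro h <;> nlinarith

lemma sign_pt {δ δ' : ℝ} (h0 : 0 < δ) (hδ : δ < δ') {t s : ℝ}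
    (ht : t ∈ Ioo (0:ℝ) 1) (hs : s ∈ Ioo (0:ℝ) 1) :
    0 ≤ (max t (1-t) - max s (1-s)) *
      (Real.cosh (δ' * L t) * Real.cosh (δ * L s)
        - Real.cosh (δ * L t) * Real.cosh (δ' * L s)) ∧
    (max t (1-t) ≠ max s (1-s) →
      0 < (max t (1-t) - max s (1-s)) *
        (Real.cosh (δ' * L t) * Real.cosh (δ * L s)
          - Real.cosh (δ * L t) * Real.cosh (δ' * L s))) := by
  rcases lt_trichotomy (max t (1-t)) (max s (1-s)) with h | h | h
  · have habs : |L t| < |L s| := (absL_lt_iff ht hs).2 h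
    have hc := cosh_core h0 hδ habs
    have hpos : 0 < (max t (1-t) - max s (1-s)) *
        (Real.cosh (δ' * L t) * Real.cosh (δ * L s)
          - Real.cosh (δ * L t) * Real.cosh (δ' * L s)) := by
      apply mul_pos_of_neg_of_neg (by linarith)
      nlinarith [hc]
    exact ⟨hpos.le, fun _ => hpos⟩
  · refine ⟨by rw [h, sub_self, zero_mul], fun hne => absurd h hne⟩
  · have habs : |L s| < |L t| := (absL_lt_iff hs ht).2 h
    have hc := cosh_core h0 hδ habs
    have hpos : 0 < (max t (1-t) - max s (1-s)) *
        (Real.cosh (δ' * L t) * Real.cosh (δ * L s)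
          - Real.cosh (δ * L t) * Real.cosh (δ' * L s)) := by
      apply mul_pos (by linarith)
      nlinarith [hc]
    exact ⟨hpos.le, fun _ => hpos⟩

lemma K_eq {γ : ℝ} (hγ : 0 < γ) (p : ℝ) {t : ℝ} (ht : t ∈ Ioo (0:ℝ) 1) :
    f (p/γ) ((1-p)/γ) t + f ((1-p)/γ) (p/γ) t
      = 2 * (t*(1-t)) ^ (1/(2*γ) - 1) * Real.cosh ((2*p-1)/(2*γ) * L t) := by
  obtain ⟨h0, h1⟩ := ht
  have h1t : (0:ℝ) < 1 - t := by linarith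
  have hγ' : γ ≠ 0 := hγ.ne'
  set X := (Real.log t + Real.log (1-t)) * (1/(2*γ) - 1) with hX
  set Y := (2*p-1)/(2*γ) * (Real.log t - Real.log (1-t)) with hY
  have lhs1 : f (p/γ) ((1-p)/γ) t = Real.exp (X + Y) := by
    simp only [f]
    rw [Real.rpow_def_of_pos h0, Real.rpow_def_of_pos h1t, ← Real.exp_add]
    congr 1
    rw [hX, hY]; field_simp; ring
  have lhs2 : f ((1-p)/γ) (p/γ) t = Real.exp (X - Y) := by
    simp only [f]
    rw [Real.rpow_def_of_pos h0, Real.rpow_def_of_pos h1t, ← Real.exp_add]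
    congr 1
    rw [hX, hY]; field_simp; ring
  have rhs : (t*(1-t)) ^ (1/(2*γ) - 1) = Real.exp X := by
    rw [Real.rpow_def_of_pos (mul_pos h0 h1t), Real.log_mul h0.ne' h1t.ne']
  have hL : (2*p-1)/(2*γ) * L t = Y := by
    rw [L, Real.log_div h0.ne' h1t.ne']
  rw [lhs1, lhs2, rhs, hL, Real.cosh_eq, Real.exp_add, Real.exp_sub, Real.exp_neg]
  have := Real.exp_ne_zero Y
  field_simp

noncomputable def K (γ p : ℝ) : ℝ → ℝ :=
  fun t => f (p/γ) ((1-p)/γ) t + f ((1-p)/γ) (p/γ) t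

noncomputable def Ai (γ p : ℝ) : ℝ := ∫ t in Ioo (0:ℝ) 1, max t (1-t) * K γ p t
noncomputable def Bi (γ p : ℝ) : ℝ := ∫ t in Ioo (0:ℝ) 1, K γ p t

lemma Ai_eq {γ p : ℝ} (hγ : 0 < γ) (hp : p ∈ Ioo (0:ℝ) 1) :
    Ai γ p = 2 * ∫ t in Ioo (0:ℝ) 1, max t (1-t) * f (p/γ) ((1-p)/γ) t := by
  have ha : 0 < p/γ := div_pos hp.1 hγ
  have hb : 0 < (1-p)/γ := div_pos (by linarith [hp.2]) hγ
  rw [Ai]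
  simp only [K, mul_add]
  rw [integral_add (int_hf ha hb) (int_hf hb ha), ← A_symm]
  ring

lemma Bi_eq {γ p : ℝ} (hγ : 0 < γ) (hp : p ∈ Ioo (0:ℝ) 1) :
    Bi γ p = 2 * ∫ t in Ioo (0:ℝ) 1, f (p/γ) ((1-p)/γ) t := by
  have ha : 0 < p/γ := div_pos hp.1 hγ
  have hb : 0 < (1-p)/γ := div_pos (by linarith [hp.2]) hγ
  rw [Bi]
  simp only [K]
  rw [integral_add (int_f ha hb) (int_f hb ha), ← I_symm]
  ring

lemma Bi_pos {γ p : ℝ} (hγ : 0 < γ) (hp : p ∈ Ioo (0:ℝ) 1) : 0 < Bi γ p := by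
  have ha : 0 < p/γ := div_pos hp.1 hγ
  have hb : 0 < (1-p)/γ := div_pos (by linarith [hp.2]) hγ
  rw [Bi_eq hγ hp]
  linarith [B_pos ha hb]

lemma v_eq2 {γ p : ℝ} (hγ : 0 < γ) (hp : p ∈ Ioo (0:ℝ) 1) :
    (∫ t, max t (1-t) ∂(betaMeasure (p/γ) ((1-p)/γ))) = Ai γ p / Bi γ p := by
  have ha : 0 < p/γ := div_pos hp.1 hγ
  have hb : 0 < (1-p)/γ := div_pos (by linarith [hp.2]) hγ
  rw [v_eq ha hb, Ai_eq hγ hp, Bi_eq hγ hp,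
    mul_div_mul_left _ _ (two_ne_zero)]


noncomputable def Gd (γ p q : ℝ) : ℝ × ℝ → ℝ := fun z =>
  (max z.1 (1-z.1) - max z.2 (1-z.2)) *
    (K γ q z.1 * K γ p z.2 - K γ p z.1 * K γ q z.2)

lemma key {γ : ℝ} (hγ : 0 < γ) {p q : ℝ} (hp : p ∈ Ioo (1/2:ℝ) 1)
    (hq : q ∈ Ioo (1/2:ℝ) 1) (hpq : p < q) :
    Ai γ p * Bi γ q < Ai γ q * Bi γ p := by
  have hp1 : p ∈ Ioo (0:ℝ) 1 := ⟨by linarith [hp.1], hp.2⟩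
  have hq1 : q ∈ Ioo (0:ℝ) 1 := ⟨by linarith [hq.1], hq.2⟩
  have hap : 0 < p/γ := div_pos hp1.1 hγ
  have hbp : 0 < (1-p)/γ := div_pos (by linarith [hp1.2]) hγ
  have haq : 0 < q/γ := div_pos hq1.1 hγ
  have hbq : 0 < (1-q)/γ := div_pos (by linarith [hq1.2]) hγ
  have iKp : Integrable (K γ p) (volume.restrict (Ioo (0:ℝ) 1)) :=
    (int_f hap hbp).add (int_f hbp hap)
  have iKq : Integrable (K γ q) (volume.restrict (Ioo (0:ℝ) 1)) :=
    (int_f haq hbq).add (int_f hbq haq)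
  have ihKp : Integrable (fun t => max t (1-t) * K γ p t)
      (volume.restrict (Ioo (0:ℝ) 1)) := by
    have h1 := (int_hf hap hbp).add (int_hf hbp hap)
    simp only [K, mul_add]
    exact h1
  have ihKq : Integrable (fun t => max t (1-t) * K γ q t)
      (volume.restrict (Ioo (0:ℝ) 1)) := by
    have h1 := (int_hf haq hbq).add (int_hf hbq haq)
    simp only [K, mul_add]
    exact h1
  have hK_eq' : ∀ (r : ℝ) {t : ℝ}, t ∈ Ioo (0:ℝ) 1 → K γ r t
      = 2 * (t*(1-t)) ^ (1/(2*γ) - 1) * Real.cosh ((2*r-1)/(2*γ) * L t) :=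
    fun r t ht => K_eq hγ r ht
  have hδp : 0 < (2*p-1)/(2*γ) := div_pos (by linarith [hp.1]) (by linarith)
  have hδpq : (2*p-1)/(2*γ) < (2*q-1)/(2*γ) := by
    rw [div_lt_div_iff₀ (by linarith) (by linarith)]
    nlinarith
  have hsign : ∀ z : ℝ × ℝ, z ∈ (Ioo (0:ℝ) 1) ×ˢ (Ioo (0:ℝ) 1) →
      0 ≤ Gd γ p q z ∧ (max z.1 (1-z.1) ≠ max z.2 (1-z.2) → 0 < Gd γ p q z) := by
    rintro ⟨t, s⟩ ⟨ht, hs⟩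
    obtain ⟨hnn, hstrict⟩ := sign_pt hδp hδpq ht hs
    have hPt : 0 < (t*(1-t)) ^ (1/(2*γ) - 1) :=
      rpow_pos_of_pos (mul_pos ht.1 (by linarith [ht.2])) _
    have hPs : 0 < (s*(1-s)) ^ (1/(2*γ) - 1) :=
      rpow_pos_of_pos (mul_pos hs.1 (by linarith [hs.2])) _
    simp only [Gd]
    rw [hK_eq' q ht, hK_eq' p ht, hK_eq' q hs, hK_eq' p hs]
    constructor
    · nlinarith [mul_nonneg (mul_pos hPt hPs).le hnn]
    · intro hne
      nlinarith [mul_pos (mul_pos hPt hPs) (hstrict hne)]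
  have hGrw : Gd γ p q = fun z : ℝ × ℝ =>
      ((max z.1 (1-z.1) * K γ q z.1) * K γ p z.2
        - (max z.1 (1-z.1) * K γ p z.1) * K γ q z.2)
      - (K γ q z.1 * (max z.2 (1-z.2) * K γ p z.2)
        - K γ p z.1 * (max z.2 (1-z.2) * K γ q z.2)) := by
    funext z
    simp only [Gd]
    ring
  have P1 : Integrable (fun z : ℝ × ℝ => (max z.1 (1-z.1) * K γ q z.1) * K γ p z.2)
      ((volume.restrict (Ioo (0:ℝ) 1)).prod (volume.restrict (Ioo (0:ℝ) 1))) :=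
    ihKq.mul_prod iKp
  have P2 : Integrable (fun z : ℝ × ℝ => (max z.1 (1-z.1) * K γ p z.1) * K γ q z.2)
      ((volume.restrict (Ioo (0:ℝ) 1)).prod (volume.restrict (Ioo (0:ℝ) 1))) :=
    ihKp.mul_prod iKq
  have P3 : Integrable (fun z : ℝ × ℝ => K γ q z.1 * (max z.2 (1-z.2) * K γ p z.2))
      ((volume.restrict (Ioo (0:ℝ) 1)).prod (volume.restrict (Ioo (0:ℝ) 1))) :=
    iKq.mul_prod ihKp
  have P4 : Integrable (fun z : ℝ × ℝ => K γ p z.1 * (max z.2 (1-z.2) * K γ q z.2))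
      ((volume.restrict (Ioo (0:ℝ) 1)).prod (volume.restrict (Ioo (0:ℝ) 1))) :=
    iKp.mul_prod ihKq
  have hGint : Integrable (Gd γ p q)
      ((volume.restrict (Ioo (0:ℝ) 1)).prod (volume.restrict (Ioo (0:ℝ) 1))) := by
    rw [hGrw]
    exact Integrable.sub (P1.sub P2) (P3.sub P4)
  have hGval : ∫ z, Gd γ p q z
        ∂((volume.restrict (Ioo (0:ℝ) 1)).prod (volume.restrict (Ioo (0:ℝ) 1)))
      = 2 * (Ai γ q * Bi γ p - Ai γ p * Bi γ q) := by
    have P12 : Integrable (fun z : ℝ × ℝ => (max z.1 (1-z.1) * K γ q z.1) * K γ p z.2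
        - (max z.1 (1-z.1) * K γ p z.1) * K γ q z.2)
        ((volume.restrict (Ioo (0:ℝ) 1)).prod (volume.restrict (Ioo (0:ℝ) 1))) := P1.sub P2
    have P34 : Integrable (fun z : ℝ × ℝ => K γ q z.1 * (max z.2 (1-z.2) * K γ p z.2)
        - K γ p z.1 * (max z.2 (1-z.2) * K γ q z.2))
        ((volume.restrict (Ioo (0:ℝ) 1)).prod (volume.restrict (Ioo (0:ℝ) 1))) := P3.sub P4
    rw [hGrw, integral_sub P12 P34, integral_sub P1 P2, integral_sub P3 P4,
      integral_prod_mul (f := fun t : ℝ => max t (1-t) * K γ q t) (g := K γ p),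
      integral_prod_mul (f := fun t : ℝ => max t (1-t) * K γ p t) (g := K γ q),
      integral_prod_mul (f := K γ q) (g := fun t : ℝ => max t (1-t) * K γ p t),
      integral_prod_mul (f := K γ p) (g := fun t : ℝ => max t (1-t) * K γ q t)]
    rw [Ai, Ai, Bi, Bi]
    ring
  have hπ : (volume.restrict (Ioo (0:ℝ) 1)).prod (volume.restrict (Ioo (0:ℝ) 1))
      = (volume.prod volume).restrict ((Ioo (0:ℝ) 1) ×ˢ (Ioo (0:ℝ) 1)) :=
    Measure.prod_restrict _ _
  have hmem : ∀ᵐ z ∂((volume.restrict (Ioo (0:ℝ) 1)).prod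
      (volume.restrict (Ioo (0:ℝ) 1))), z ∈ (Ioo (0:ℝ) 1) ×ˢ (Ioo (0:ℝ) 1) := by
    rw [hπ]
    exact ae_restrict_mem (measurableSet_Ioo.prod measurableSet_Ioo)
  have hGnn : 0 ≤ᵐ[(volume.restrict (Ioo (0:ℝ) 1)).prod (volume.restrict (Ioo (0:ℝ) 1))]
      Gd γ p q := hmem.mono fun z hz => (hsign z hz).1
  have hsub : (Ioo (3/4:ℝ) (7/8)) ×ˢ (Ioo (9/16:ℝ) (5/8)) ⊆
      Function.support (Gd γ p q) := by
    rintro ⟨t, s⟩ ⟨ht, hs⟩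
    have ht1 : t ∈ Ioo (0:ℝ) 1 := ⟨by linarith [ht.1], by linarith [ht.2]⟩
    have hs1 : s ∈ Ioo (0:ℝ) 1 := ⟨by linarith [hs.1], by linarith [hs.2]⟩
    have hne : max t (1-t) ≠ max s (1-s) := by
      have h1 : (3/4:ℝ) < max t (1-t) := lt_of_lt_of_le ht.1 (le_max_left _ _)
      have h2 : max s (1-s) < 5/8 := max_lt hs.2 (by linarith [hs.1])
      intro heq
      rw [heq] at h1
      linarith
    exact ((hsign (t, s) ⟨ht1, hs1⟩).2 hne).ne'
  have hmeas_pos : 0 < ((volume.restrict (Ioo (0:ℝ) 1)).prod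
      (volume.restrict (Ioo (0:ℝ) 1))) (Function.support (Gd γ p q)) := by
    refine lt_of_lt_of_le ?_ (measure_mono hsub)
    have hsub1 : Ioo (3/4:ℝ) (7/8) ⊆ Ioo (0:ℝ) 1 := by
      intro x hx
      exact ⟨by linarith [hx.1], by linarith [hx.2]⟩
    have hsub2 : Ioo (9/16:ℝ) (5/8) ⊆ Ioo (0:ℝ) 1 := by
      intro x hx
      exact ⟨by linarith [hx.1], by linarith [hx.2]⟩
    rw [Measure.prod_prod, Measure.restrict_apply' measurableSet_Ioo,
      Measure.restrict_apply' measurableSet_Ioo,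
      Set.inter_eq_left.2 hsub1, Set.inter_eq_left.2 hsub2,
      Real.volume_Ioo, Real.volume_Ioo]
    apply ENNReal.mul_pos
    · simp only [ne_eq, ENNReal.ofReal_eq_zero, not_le]
      norm_num
    · simp only [ne_eq, ENNReal.ofReal_eq_zero, not_le]
      norm_num
  have hGpos : 0 < ∫ z, Gd γ p q z
      ∂((volume.restrict (Ioo (0:ℝ) 1)).prod (volume.restrict (Ioo (0:ℝ) 1))) :=
    (integral_pos_iff_support_of_nonneg_ae hGnn hGint).2 hmeas_pos
  rw [hGval] at hGpos
  linarith

end Stmt12Aux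

/-- For `v(p) = E[max(T_p, 1-T_p)]` with `T_p ~ Beta(p/γ,(1-p)/γ)`:
(i) `v(p) = v(1-p)`; (ii) `v` is strictly increasing on `(1/2,1)`. -/
theorem stmt_12 (γ : ℝ) (hγ : 0 < γ) :
    (∀ p ∈ Set.Ioo (0:ℝ) 1,
      (∫ t, max t (1 - t) ∂(betaMeasure (p/γ) ((1-p)/γ)))
        = ∫ t, max t (1 - t) ∂(betaMeasure ((1-p)/γ) (p/γ))) ∧
    StrictMonoOn (fun p : ℝ => ∫ t, max t (1 - t) ∂(betaMeasure (p/γ) ((1-p)/γ)))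
      (Set.Ioo (1/2:ℝ) 1) := by
  constructor
  · intro p hp
    have ha : 0 < p/γ := div_pos hp.1 hγ
    have hb : 0 < (1-p)/γ := div_pos (by linarith [hp.2]) hγ
    rw [Stmt12Aux.v_eq ha hb, Stmt12Aux.v_eq hb ha,
      Stmt12Aux.A_symm (p/γ) ((1-p)/γ), Stmt12Aux.I_symm (p/γ) ((1-p)/γ)]
  · intro p hp q hq hpq
    have hp1 : p ∈ Set.Ioo (0:ℝ) 1 := ⟨by linarith [hp.1], hp.2⟩
    have hq1 : q ∈ Set.Ioo (0:ℝ) 1 := ⟨by linarith [hq.1], hq.2⟩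
    simp only
    rw [Stmt12Aux.v_eq2 hγ hp1, Stmt12Aux.v_eq2 hγ hq1,
      div_lt_div_iff₀ (Stmt12Aux.Bi_pos hγ hp1) (Stmt12Aux.Bi_pos hγ hq1)]
    exact Stmt12Aux.key hγ hp hq hpq
end

section
/- Fix γ > 0 and p ∈ (0,1) with p ≠ 1/2, and let T_p ~ Beta(p/γ, (1-p)/γ). The probability of making a Bayesian choice, P((T_p − 1/2)(p − 1/2) > 0), is strictly increasing in |p − 1/2|: if |p_x − 1/2| > |p_y − 1/2| then P((T_{p_x} − 1/2)(p_x − 1/2) > 0) > P((T_{p_y} − 1/2)(p_y − 1/2) > 0). -/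
/-!
Write `T ~ Beta(a, b)` with unnormalised density `w_{a,b}(t) = t^(a-1) (1-t)^(b-1)`, so that
`P(T > 1/2) = U / (L + U)` with `L`, `U` the masses of `w_{a,b}` on `(0, 1/2)` and `(1/2, 1)`.
Moving the parameters to `(a + δ, b - δ)` multiplies the density by `(t / (1 - t))^δ`, which is
`< 1` on `(0, 1/2)` and `> 1` on `(1/2, 1)`; hence `L` strictly drops, `U` strictly grows, and
`p ↦ P(T_p > 1/2)` is strictly increasing on `(0, 1)`. The reflection `t ↦ 1 - t` exchanges
`Beta(a, b)` and `Beta(b, a)`, so the probability of a Bayesian choice at `p` equals `P(T_q > 1/2)`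
with `q = 1/2 + |p - 1/2|`, and the theorem follows from monotonicity in `q`.
-/

open MeasureTheory Set

noncomputable def betaWeight (a b t : ℝ) : ℝ := t ^ (a - 1) * (1 - t) ^ (b - 1)

section BetaWeight

variable {a b t : ℝ}

lemma betaWeight_pos (ht : t ∈ Ioo (0:ℝ) 1) : 0 < betaWeight a b t :=
  mul_pos (Real.rpow_pos_of_pos ht.1 _) (Real.rpow_pos_of_pos (sub_pos.2 ht.2) _)

lemma betaWeight_nonneg (ht : t ∈ Icc (0:ℝ) 1) : 0 ≤ betaWeight a b t :=
  mul_nonneg (Real.rpow_nonneg ht.1 _) (Real.rpow_nonneg (sub_nonneg.2 ht.2) _)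

lemma measurable_betaWeight (a b : ℝ) : Measurable (betaWeight a b) := by
  unfold betaWeight
  fun_prop

lemma betaWeight_one_sub (a b t : ℝ) : betaWeight a b (1 - t) = betaWeight b a t := by
  rw [betaWeight, betaWeight, sub_sub_cancel, mul_comm]

lemma betaWeight_add_sub (ht : t ∈ Ioo (0:ℝ) 1) (a b δ : ℝ) :
    betaWeight (a + δ) (b - δ) t = betaWeight a b t * (t / (1 - t)) ^ δ := by
  have h1t : 0 < 1 - t := sub_pos.2 ht.2
  rw [betaWeight, betaWeight, Real.div_rpow ht.1.le h1t.le, show a + δ - 1 = a - 1 + δ by ring,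
    show b - δ - 1 = b - 1 - δ by ring, Real.rpow_add ht.1, Real.rpow_sub h1t]
  ring

lemma betaWeight_add_sub_lt {δ : ℝ} (hδ : 0 < δ) (ht : t ∈ Ioo (0:ℝ) (1/2)) :
    betaWeight (a + δ) (b - δ) t < betaWeight a b t := by
  have ht' : t ∈ Ioo (0:ℝ) 1 := ⟨ht.1, by linarith [ht.2]⟩
  have hratio : (t / (1 - t)) ^ δ < 1 :=
    Real.rpow_lt_one (div_nonneg ht.1.le (by linarith [ht.2]))
      ((div_lt_one (by linarith [ht.2])).2 (by linarith [ht.2])) hδ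
  rw [betaWeight_add_sub ht']
  exact mul_lt_of_lt_one_right (betaWeight_pos ht') hratio

lemma betaWeight_lt_add_sub {δ : ℝ} (hδ : 0 < δ) (ht : t ∈ Ioo (1/2:ℝ) 1) :
    betaWeight a b t < betaWeight (a + δ) (b - δ) t := by
  have ht' : t ∈ Ioo (0:ℝ) 1 := ⟨by linarith [ht.1], ht.2⟩
  have hratio : 1 < (t / (1 - t)) ^ δ :=
    Real.one_lt_rpow ((one_lt_div (by linarith [ht.2])).2 (by linarith [ht.1])) hδ
  rw [betaWeight_add_sub ht']
  exact lt_mul_of_one_lt_right (betaWeight_pos ht') hratio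

lemma intervalIntegrable_betaWeight_left (ha : 0 < a) (b : ℝ) :
    IntervalIntegrable (betaWeight a b) volume 0 (1/2) := by
  refine (intervalIntegral.intervalIntegrable_rpow' (by linarith)).mul_continuousOn ?_
  refine (continuousOn_const.sub continuousOn_id).rpow_const fun x hx => Or.inl ?_
  rw [uIcc_of_le (by norm_num)] at hx
  show (1:ℝ) - x ≠ 0
  linarith [hx.2]

lemma intervalIntegrable_betaWeight_right (a : ℝ) (hb : 0 < b) :
    IntervalIntegrable (betaWeight a b) volume (1/2) 1 := by
  have h := ((intervalIntegrable_betaWeight_left hb a).comp_sub_left 1).symm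
  simp only [betaWeight_one_sub] at h
  norm_num at h
  exact h

end BetaWeight

noncomputable def lowerMass (a b : ℝ) : ℝ := ∫ t in (0:ℝ)..1/2, betaWeight a b t

noncomputable def upperMass (a b : ℝ) : ℝ := ∫ t in (1/2:ℝ)..1, betaWeight a b t

section Masses

variable {a b δ : ℝ}

lemma lowerMass_pos (ha : 0 < a) (b : ℝ) : 0 < lowerMass a b :=
  intervalIntegral.intervalIntegral_pos_of_pos_on (intervalIntegrable_betaWeight_left ha b)
    (fun _ ht => betaWeight_pos ⟨ht.1, by linarith [ht.2]⟩) (by norm_num)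

lemma upperMass_pos (a : ℝ) (hb : 0 < b) : 0 < upperMass a b :=
  intervalIntegral.intervalIntegral_pos_of_pos_on (intervalIntegrable_betaWeight_right a hb)
    (fun _ ht => betaWeight_pos ⟨by linarith [ht.1], ht.2⟩) (by norm_num)

lemma lowerMass_eq_upperMass (a b : ℝ) : lowerMass a b = upperMass b a := by
  simp only [lowerMass, ← betaWeight_one_sub b a, intervalIntegral.integral_comp_sub_left]
  norm_num [upperMass]

lemma lowerMass_add_upperMass (ha : 0 < a) (hb : 0 < b) :
    lowerMass a b + upperMass a b = ∫ t in (0:ℝ)..1, betaWeight a b t :=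
  intervalIntegral.integral_add_adjacent_intervals (intervalIntegrable_betaWeight_left ha b)
    (intervalIntegrable_betaWeight_right a hb)

lemma lowerMass_add_sub_lt (ha : 0 < a) (hδ : 0 < δ) :
    lowerMass (a + δ) (b - δ) < lowerMass a b := by
  have hgap := intervalIntegral.intervalIntegral_pos_of_pos_on
    ((intervalIntegrable_betaWeight_left ha b).sub
      (intervalIntegrable_betaWeight_left (by linarith) (b - δ)))
    (fun _ ht => sub_pos.2 (betaWeight_add_sub_lt hδ ht)) (by norm_num : (0:ℝ) < 1/2)
  rw [intervalIntegral.integral_sub (intervalIntegrable_betaWeight_left ha b)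
    (intervalIntegrable_betaWeight_left (by linarith) (b - δ))] at hgap
  exact sub_pos.1 hgap

lemma upperMass_lt_add_sub (hδ : 0 < δ) (hδb : δ < b) :
    upperMass a b < upperMass (a + δ) (b - δ) := by
  have hgap := intervalIntegral.intervalIntegral_pos_of_pos_on
    ((intervalIntegrable_betaWeight_right (a + δ) (sub_pos.2 hδb)).sub
      (intervalIntegrable_betaWeight_right a (by linarith)))
    (fun _ ht => sub_pos.2 (betaWeight_lt_add_sub hδ ht)) (by norm_num : (1/2:ℝ) < 1)
  rw [intervalIntegral.integral_sub (intervalIntegrable_betaWeight_right (a + δ) (sub_pos.2 hδb))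
    (intervalIntegrable_betaWeight_right a (by linarith))] at hgap
  exact sub_pos.1 hgap

end Masses

section BetaMeasure

variable {a b : ℝ}

lemma betaMeasure_apply (a b : ℝ) {s : Set ℝ} (hs : MeasurableSet s) :
    betaMeasure a b s = ∫⁻ t in Ioo 0 1 ∩ s,
      ENNReal.ofReal (betaWeight a b t / ∫ x in (0:ℝ)..1, betaWeight a b x) := by
  rw [betaMeasure, withDensity_apply _ hs, ← setLIntegral_indicator measurableSet_Ioo]
  congr 1
  funext t
  by_cases ht : t ∈ Ioo (0:ℝ) 1 <;> simp [betaPdf, betaWeight, ht]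

lemma betaMeasure_inter_Ioo (a b : ℝ) {s : Set ℝ} (hs : MeasurableSet s) :
    betaMeasure a b (Ioo 0 1 ∩ s) = betaMeasure a b s := by
  rw [betaMeasure_apply a b (measurableSet_Ioo.inter hs), betaMeasure_apply a b hs,
    ← inter_assoc, inter_self]

lemma betaMeasure_Ioo_toReal (a b : ℝ) {u v : ℝ} (hu : 0 ≤ u) (huv : u ≤ v) (hv : v ≤ 1) :
    (betaMeasure a b (Ioo u v)).toReal =
      (∫ t in u..v, betaWeight a b t) / ∫ t in (0:ℝ)..1, betaWeight a b t := by
  have hsub : Ioo u v ⊆ Ioo 0 1 := Ioo_subset_Ioo hu hv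
  have htotal : 0 ≤ ∫ t in (0:ℝ)..1, betaWeight a b t :=
    intervalIntegral.integral_nonneg zero_le_one fun _ => betaWeight_nonneg
  have hnonneg : 0 ≤ᵐ[volume.restrict (Ioo u v)]
      fun t => betaWeight a b t / ∫ x in (0:ℝ)..1, betaWeight a b x := by
    filter_upwards [ae_restrict_mem measurableSet_Ioo] with t ht
    exact div_nonneg (betaWeight_pos (hsub ht)).le htotal
  rw [betaMeasure_apply a b measurableSet_Ioo, inter_eq_right.2 hsub,
    ← integral_eq_lintegral_of_nonneg_ae hnonneg
      ((measurable_betaWeight a b).div_const _).aestronglyMeasurable,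
    integral_div, ← integral_Ioc_eq_integral_Ioo, ← intervalIntegral.integral_of_le huv]

lemma betaMeasure_Ioi_half_toReal (ha : 0 < a) (hb : 0 < b) :
    (betaMeasure a b (Ioi (1/2))).toReal = upperMass a b / (lowerMass a b + upperMass a b) := by
  have hset : Ioo 0 1 ∩ Ioi (1/2) = Ioo (1/2 : ℝ) 1 :=
    Set.ext fun t => ⟨fun h => ⟨h.2, h.1.2⟩, fun h => ⟨⟨by linarith [h.1], h.2⟩, h.1⟩⟩
  rw [← betaMeasure_inter_Ioo a b measurableSet_Ioi, hset,
    betaMeasure_Ioo_toReal a b (by norm_num) (by norm_num) le_rfl,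
    lowerMass_add_upperMass ha hb, upperMass]

lemma betaMeasure_Iio_half_toReal (ha : 0 < a) (hb : 0 < b) :
    (betaMeasure a b (Iio (1/2))).toReal = (betaMeasure b a (Ioi (1/2))).toReal := by
  have hset : Ioo 0 1 ∩ Iio (1/2) = Ioo (0 : ℝ) (1/2) :=
    Set.ext fun t => ⟨fun h => ⟨h.1.1, h.2⟩, fun h => ⟨⟨h.1, by linarith [h.2]⟩, h.2⟩⟩
  rw [← betaMeasure_inter_Ioo a b measurableSet_Iio, hset,
    betaMeasure_Ioo_toReal a b le_rfl (by norm_num) (by norm_num),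
    ← lowerMass_add_upperMass ha hb, betaMeasure_Ioi_half_toReal hb ha,
    ← lowerMass_eq_upperMass a b, lowerMass_eq_upperMass b a, add_comm]
  rfl

lemma betaMeasure_Ioi_half_toReal_lt_add_sub {δ : ℝ} (ha : 0 < a) (hδ : 0 < δ) (hδb : δ < b) :
    (betaMeasure a b (Ioi (1/2))).toReal < (betaMeasure (a + δ) (b - δ) (Ioi (1/2))).toReal := by
  have hL := lowerMass_pos ha b
  have hL' := lowerMass_pos (add_pos ha hδ) (b - δ)
  have hU := upperMass_pos a (hδ.trans hδb)
  have hU' := upperMass_pos (a + δ) (sub_pos.2 hδb)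
  have hlower := lowerMass_add_sub_lt (b := b) ha hδ
  have hupper := upperMass_lt_add_sub (a := a) hδ hδb
  rw [betaMeasure_Ioi_half_toReal ha (hδ.trans hδb),
    betaMeasure_Ioi_half_toReal (add_pos ha hδ) (sub_pos.2 hδb),
    div_lt_div_iff₀ (by linarith) (by linarith)]
  nlinarith

end BetaMeasure

theorem strictMonoOn_betaMeasure_Ioi_half {γ : ℝ} (hγ : 0 < γ) :
    StrictMonoOn (fun p => (betaMeasure (p / γ) ((1 - p) / γ) (Ioi (1/2))).toReal)
      (Ioo 0 1) := by
  intro p hp p' hp' hpp'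
  have hshift : (p' - p) / γ < (1 - p) / γ := div_lt_div_of_pos_right (by linarith [hp'.2]) hγ
  have h := betaMeasure_Ioi_half_toReal_lt_add_sub (div_pos hp.1 hγ)
    (div_pos (sub_pos.2 hpp') hγ) hshift
  rwa [← add_div, ← sub_div, add_sub_cancel, sub_sub_sub_cancel_right] at h

lemma bayesianChoice_eq {γ p : ℝ} (hγ : 0 < γ) (hp : p ∈ Ioo (0:ℝ) 1) (hp' : p ≠ 1/2) :
    (betaMeasure (p / γ) ((1 - p) / γ) {t | (t - 1/2) * (p - 1/2) > 0}).toReal =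
      (betaMeasure ((1/2 + |p - 1/2|) / γ) ((1 - (1/2 + |p - 1/2|)) / γ) (Ioi (1/2))).toReal := by
  rcases hp'.lt_or_gt with hlt | hgt
  · have hset : {t : ℝ | (t - 1/2) * (p - 1/2) > 0} = Iio (1/2) := by
      ext t
      rw [mem_ofPred_eq, mem_Iio, gt_iff_lt, ← neg_mul_neg,
        mul_pos_iff_of_pos_right (by linarith), neg_pos, sub_neg]
    rw [hset, betaMeasure_Iio_half_toReal (div_pos hp.1 hγ) (div_pos (sub_pos.2 hp.2) hγ),
      abs_of_neg (by linarith), show 1/2 + -(p - 1/2) = 1 - p by ring, sub_sub_cancel]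
  · have hset : {t : ℝ | (t - 1/2) * (p - 1/2) > 0} = Ioi (1/2) := by
      ext t
      rw [mem_ofPred_eq, mem_Ioi, gt_iff_lt, mul_pos_iff_of_pos_right (by linarith), sub_pos]
    rw [hset, abs_of_pos (by linarith), add_sub_cancel]

lemma half_add_abs_sub_half_mem_Ioo {p : ℝ} (hp : p ∈ Ioo (0:ℝ) 1) :
    1/2 + |p - 1/2| ∈ Ioo (0:ℝ) 1 :=
  ⟨by positivity, by linarith [abs_sub_lt_iff.2 (⟨by linarith [hp.2], by linarith [hp.1]⟩ :
    p - 1/2 < 1/2 ∧ 1/2 - p < 1/2)]⟩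

/-- The probability of a Bayesian choice, `P((T_p - 1/2)(p - 1/2) > 0)` with
`T_p ~ Beta(p/γ,(1-p)/γ)`, is strictly increasing in `|p - 1/2|`. -/
theorem stmt_13 (γ : ℝ) (hγ : 0 < γ) (px py : ℝ)
    (hx : px ∈ Set.Ioo (0:ℝ) 1) (hy : py ∈ Set.Ioo (0:ℝ) 1)
    (h : |px - 1/2| > |py - 1/2|) :
    ((betaMeasure (px/γ) ((1-px)/γ)) {t : ℝ | (t - 1/2) * (px - 1/2) > 0}).toReal
      > ((betaMeasure (py/γ) ((1-py)/γ)) {t : ℝ | (t - 1/2) * (py - 1/2) > 0}).toReal := by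
  have hxne : px ≠ 1/2 := by
    rintro rfl
    simp only [sub_self, abs_zero] at h
    exact (abs_nonneg _).not_gt h
  have hmono := strictMonoOn_betaMeasure_Ioi_half hγ (half_add_abs_sub_half_mem_Ioo hy)
    (half_add_abs_sub_half_mem_Ioo hx) (by linarith)
  rw [bayesianChoice_eq hγ hx hxne]
  rcases eq_or_ne py (1/2) with rfl | hyne
  · have hempty : {t : ℝ | (t - 1/2) * (1/2 - 1/2) > 0} = ∅ := by simp
    rw [hempty, measure_empty, ENNReal.toReal_zero]
    exact ENNReal.toReal_nonneg.trans_lt hmono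
  · rw [bayesianChoice_eq hγ hy hyne]
    exact hmono
end

section
/- Let p ∈ (1/2,1), q = 1−p, and v: (0,1) → [1/2,1] satisfy v(t) = v(1−t), v strictly increasing on (1/2,1), and v(t) > max(t, 1−t) for t ∈ (0,1) with t ∉ {0,1}. Define V1 = p·v(p²/(p²+q²)) + q·v(1/2) and V2 = q·v(p²/(p²+q²)) + p·v(1/2). Then V1·p + V2·(1−p) > p, and consequently the threshold p̄ = V2/(1 − V1 + V2) satisfies p̄ > p. -/
/-- With `V1 = p·v(p²/(p²+q²)) + q·v(1/2)` and `V2 = q·v(p²/(p²+q²)) + p·v(1/2)` for a symmetric,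
strictly increasing (on `(1/2,1)`) assessment `v` valued in `[1/2,1]` with `v(t) > max(t,1-t)`:
`V1·p + V2·(1-p) > p`, hence the threshold `p̄ = V2/(1-V1+V2)` satisfies `p̄ > p`. -/
theorem stmt_16 (p : ℝ) (hp : 1/2 < p) (hp1 : p < 1) (v : ℝ → ℝ)
    (hrange : ∀ t ∈ Set.Ioo (0:ℝ) 1, v t ∈ Set.Icc (1/2:ℝ) 1)
    (hsymm : ∀ t ∈ Set.Ioo (0:ℝ) 1, v t = v (1 - t))
    (hmono : StrictMonoOn v (Set.Ioo (1/2:ℝ) 1))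
    (hjensen : ∀ t ∈ Set.Ioo (0:ℝ) 1, max t (1 - t) < v t) :
    (p * v (p^2/(p^2+(1-p)^2)) + (1-p) * v (1/2)) * p
      + ((1-p) * v (p^2/(p^2+(1-p)^2)) + p * v (1/2)) * (1-p) > p ∧
    p < ((1-p) * v (p^2/(p^2+(1-p)^2)) + p * v (1/2))
        / (1 - (p * v (p^2/(p^2+(1-p)^2)) + (1-p) * v (1/2))
            + ((1-p) * v (p^2/(p^2+(1-p)^2)) + p * v (1/2))) := by
  have hq : 0 < 1 - p := by linarith
  have hden : (0:ℝ) < p^2 + (1-p)^2 := by positivity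
  set x := p^2/(p^2+(1-p)^2) with hxdef
  have hx0 : 0 < x := by positivity
  have hx1 : x < 1 := by
    rw [hxdef, div_lt_one hden]; nlinarith
  have hxhalf : 1/2 < x := by
    rw [hxdef, lt_div_iff₀ hden]; nlinarith
  have hA : x < v x := by
    have h := hjensen x ⟨hx0, hx1⟩
    rwa [max_eq_left (by linarith)] at h
  have hB : 1/2 < v (1/2) := by
    have h := hjensen (1/2) ⟨by norm_num, by norm_num⟩
    norm_num at h
    linarith [h]
  have hA1 : v x ≤ 1 := (hrange x ⟨hx0, hx1⟩).2
  have hB1 : v (1/2) ≤ 1 := (hrange (1/2) ⟨by norm_num, by norm_num⟩).2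
  have hAx : p^2 < v x * (p^2+(1-p)^2) := by
    have := (div_lt_iff₀ hden).mp hA
    linarith
  have hmain : (p * v x + (1-p) * v (1/2)) * p
      + ((1-p) * v x + p * v (1/2)) * (1-p) > p := by
    nlinarith [mul_pos (show (0:ℝ) < p by linarith) hq]
  refine ⟨hmain, ?_⟩
  have hD : 0 < 1 - (p * v x + (1-p) * v (1/2)) + ((1-p) * v x + p * v (1/2)) := by
    nlinarith
  rw [lt_div_iff₀ hD]
  nlinarith
end

section
/- Let w0, r > 0, α ≥ 0, and 1/2 < V2 < V1 < 1. Define h(b, t) = (r+α)·[V1·t + V2·(1−t) − max(t, 1−t)] − b and the optimal bid b*(t) = min(w0, max(0, (r+α)(V1 t + V2 (1−t) − max(t, 1−t)))). Then b*(t) = 0 if and only if t ≤ (1−V2)/(1+V1−V2) or t ≥ V2/(1+V2−V1); b* is non-decreasing on [0, 1/2] and non-increasing on [1/2, 1]; and (1−V2)/(1+V1−V2) < 1/2 < V2/(1+V2−V1). -/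
/-- Optimal bidding strategy: with `b*(t) = min(w0, max(0, (r+α)(V1·t + V2·(1-t) - max(t,1-t))))`,
`b*(t) = 0` iff `t ≤ (1-V2)/(1+V1-V2)` or `t ≥ V2/(1+V2-V1)`; `b*` is non-decreasing on
`[0,1/2]` and non-increasing on `[1/2,1]`; and the two thresholds straddle `1/2`. -/
theorem stmt_17 (w0 r α V1 V2 : ℝ) (hw : 0 < w0) (hr : 0 < r) (hα : 0 ≤ α)
    (h1 : 1/2 < V2) (h2 : V2 < V1) (h3 : V1 < 1) :
    (∀ t ∈ Set.Icc (0:ℝ) 1,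
      min w0 (max 0 ((r+α) * (V1*t + V2*(1-t) - max t (1-t)))) = 0 ↔
        t ≤ (1-V2)/(1+V1-V2) ∨ V2/(1+V2-V1) ≤ t) ∧
    MonotoneOn (fun t : ℝ => min w0 (max 0 ((r+α) * (V1*t + V2*(1-t) - max t (1-t)))))
      (Set.Icc (0:ℝ) (1/2)) ∧
    AntitoneOn (fun t : ℝ => min w0 (max 0 ((r+α) * (V1*t + V2*(1-t) - max t (1-t)))))
      (Set.Icc (1/2:ℝ) 1) ∧
    (1-V2)/(1+V1-V2) < 1/2 ∧ 1/2 < V2/(1+V2-V1) := by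
  have hcpos : 0 < r + α := by linarith
  have hd1 : 0 < 1 + V1 - V2 := by linarith
  have hd2 : 0 < 1 + V2 - V1 := by linarith
  have hA : (1-V2)/(1+V1-V2) < 1/2 := by rw [div_lt_iff₀ hd1]; linarith
  have hB : (1/2:ℝ) < V2/(1+V2-V1) := by rw [lt_div_iff₀ hd2]; linarith
  have key : ∀ x : ℝ, min w0 (max 0 x) = 0 ↔ x ≤ 0 := by
    intro x
    constructor
    · intro h
      by_contra hx
      push_neg at hx
      have h1 : 0 < min w0 (max 0 x) := lt_min hw (lt_max_of_lt_right hx)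
      linarith
    · intro h
      rw [max_eq_left h, min_eq_right hw.le]
  refine ⟨?_, ?_, ?_, hA, hB⟩
  · intro t ht
    rw [key]
    rcases le_or_gt t (1/2) with h | h
    · have hm : max t (1-t) = 1-t := max_eq_right (by linarith)
      rw [hm]
      constructor
      · intro hle
        left
        rw [le_div_iff₀ hd1]
        nlinarith
      · rintro (hle | hge)
        · rw [le_div_iff₀ hd1] at hle
          nlinarith
        · exfalso; linarith
    · have hm : max t (1-t) = t := max_eq_left (by linarith)
      rw [hm]
      constructor
      · intro hle
        right
        rw [div_le_iff₀ hd2]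
        nlinarith
      · rintro (hle | hge)
        · exfalso; linarith
        · rw [div_le_iff₀ hd2] at hge
          nlinarith
  · intro a ha b hb hab
    dsimp only
    have hma : max a (1-a) = 1-a := max_eq_right (by linarith [ha.2])
    have hmb : max b (1-b) = 1-b := max_eq_right (by linarith [hb.2])
    rw [hma, hmb]
    refine min_le_min le_rfl (max_le_max le_rfl ?_)
    apply mul_le_mul_of_nonneg_left _ hcpos.le
    nlinarith [mul_nonneg (sub_nonneg.mpr hab) hd1.le]
  · intro a ha b hb hab
    dsimp only
    have hma : max a (1-a) = a := max_eq_left (by linarith [ha.1])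
    have hmb : max b (1-b) = b := max_eq_left (by linarith [hb.1])
    rw [hma, hmb]
    refine min_le_min le_rfl (max_le_max le_rfl ?_)
    apply mul_le_mul_of_nonneg_left _ hcpos.le
    nlinarith [mul_nonneg (sub_nonneg.mpr hab) hd2.le]
end

section
/- Let p ∈ (1/2,1), q = 1−p, π ∈ (1/2,1). Define random variables X taking value p²/(p²+q²) with probability p²+q² and value 1/2 with probability 2pq, and Y taking value pπ/(pπ+q(1−π)) with probability pπ+q(1−π) and value p(1−π)/(p(1−π)+qπ) with probability p(1−π)+qπ. Then E[X] = E[Y] = p, and if π < p, then X is a mean-preserving spread of Y: for every convex function v on (0,1), E[v(X)] ≥ E[v(Y)], with strict inequality for strictly convex v. -/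
set_option maxHeartbeats 2000000 in
/-- The private-signal posterior lottery `X` is a mean-preserving spread of the social-signal
posterior lottery `Y` when `π < p`: both have mean `p`, and every convex `v` on `(0,1)` gives
`E[v(X)] ≥ E[v(Y)]`, strictly for strictly convex `v`. -/
theorem stmt_18 (p π : ℝ) (hp : 1/2 < p) (hp1 : p < 1) (hπ : 1/2 < π) (hπ1 : π < 1) :
    ((p^2+(1-p)^2) * (p^2/(p^2+(1-p)^2)) + 2*p*(1-p) * (1/2) = p) ∧
    ((p*π+(1-p)*(1-π)) * (p*π/(p*π+(1-p)*(1-π)))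
      + (p*(1-π)+(1-p)*π) * (p*(1-π)/(p*(1-π)+(1-p)*π)) = p) ∧
    (π < p → ∀ v : ℝ → ℝ, ConvexOn ℝ (Set.Ioo (0:ℝ) 1) v →
      (p*π+(1-p)*(1-π)) * v (p*π/(p*π+(1-p)*(1-π)))
        + (p*(1-π)+(1-p)*π) * v (p*(1-π)/(p*(1-π)+(1-p)*π))
      ≤ (p^2+(1-p)^2) * v (p^2/(p^2+(1-p)^2)) + 2*p*(1-p) * v (1/2)) ∧
    (π < p → ∀ v : ℝ → ℝ, StrictConvexOn ℝ (Set.Ioo (0:ℝ) 1) v →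
      (p*π+(1-p)*(1-π)) * v (p*π/(p*π+(1-p)*(1-π)))
        + (p*(1-π)+(1-p)*π) * v (p*(1-π)/(p*(1-π)+(1-p)*π))
      < (p^2+(1-p)^2) * v (p^2/(p^2+(1-p)^2)) + 2*p*(1-p) * v (1/2)) := by
  have hp0 : (0:ℝ) < p := by linarith
  have hq0 : (0:ℝ) < 1 - p := by linarith
  have hπ0 : (0:ℝ) < π := by linarith
  have hπ1' : (0:ℝ) < 1 - π := by linarith
  have hd1 : (0:ℝ) < p*π+(1-p)*(1-π) := by positivity
  have hd2 : (0:ℝ) < p*(1-π)+(1-p)*π := by positivity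
  have hD : (0:ℝ) < p^2+(1-p)^2 := by positivity
  refine ⟨by field_simp [hD.ne']; ring, by field_simp [hd1.ne', hd2.ne']; ring, ?_, ?_⟩
  all_goals {
    intro hπp v hv
    set a := p^2/(p^2+(1-p)^2) with ha_def
    set y1 := p*π/(p*π+(1-p)*(1-π)) with hy1_def
    set y2 := p*(1-π)/(p*(1-π)+(1-p)*π) with hy2_def
    have hab : (0:ℝ) < a - 1/2 := by
      rw [ha_def, sub_pos, lt_div_iff₀ hD]; nlinarith
    have hy1l : 1/2 < y1 := by
      rw [hy1_def, lt_div_iff₀ hd1]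
      nlinarith [mul_lt_mul'' (show (1:ℝ)-p < p by linarith)
        (show (1:ℝ)-π < π by linarith) hq0.le hπ1'.le]
    have hy1u : y1 < a := by
      rw [hy1_def, ha_def, div_lt_div_iff₀ hd1 hD]
      nlinarith [mul_pos (mul_pos hp0 hq0) (sub_pos.2 hπp)]
    have hy2l : 1/2 < y2 := by
      rw [hy2_def, lt_div_iff₀ hd2]; nlinarith
    have hy2u : y2 < a := by
      rw [hy2_def, ha_def, div_lt_div_iff₀ hd2 hD]
      nlinarith [mul_pos (mul_pos hp0 hq0) (show (0:ℝ) < π - (1-p) by linarith)]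
    set t1 := (y1 - 1/2)/(a - 1/2) with ht1_def
    set t2 := (y2 - 1/2)/(a - 1/2) with ht2_def
    have ht10 : 0 < t1 := div_pos (by linarith) hab
    have ht11 : t1 < 1 := (div_lt_one hab).2 (by linarith)
    have ht20 : 0 < t2 := div_pos (by linarith) hab
    have ht21 : t2 < 1 := (div_lt_one hab).2 (by linarith)
    have hc1 : t1 * (a - 1/2) = y1 - 1/2 := div_mul_cancel₀ _ hab.ne'
    have hc2 : t2 * (a - 1/2) = y2 - 1/2 := div_mul_cancel₀ _ hab.ne'
    have hy1e : y1 = t1 * a + (1 - t1) * (1/2) := by linear_combination -hc1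
    have hy2e : y2 = t2 * a + (1 - t2) * (1/2) := by linear_combination -hc2
    have key : (p*π+(1-p)*(1-π))*(y1 - 1/2) + (p*(1-π)+(1-p)*π)*(y2 - 1/2)
        = (p^2+(1-p)^2)*(a - 1/2) := by
      rw [hy1_def, hy2_def, ha_def]
      field_simp
      ring
    have hsum : (p*π+(1-p)*(1-π)) * t1 + (p*(1-π)+(1-p)*π) * t2 = p^2+(1-p)^2 := by
      have h := key
      apply mul_right_cancel₀ hab.ne'
      linear_combination (p*π+(1-p)*(1-π))*hc1 + (p*(1-π)+(1-p)*π)*hc2 + h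
    have haI : a ∈ Set.Ioo (0:ℝ) 1 := by
      constructor
      · rw [ha_def]; positivity
      · rw [ha_def, div_lt_one hD]; nlinarith [pow_pos hq0 2]
    have hbI : (1/2 : ℝ) ∈ Set.Ioo (0:ℝ) 1 := by constructor <;> norm_num
    have heq : (p*π+(1-p)*(1-π)) * (t1 * v a + (1 - t1) * v (1/2))
        + (p*(1-π)+(1-p)*π) * (t2 * v a + (1 - t2) * v (1/2))
        = (p^2+(1-p)^2) * v a + 2*p*(1-p) * v (1/2) := by
      linear_combination (v a - v (1/2)) * hsum
    first
    | · -- convex case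
        have h1 := hv.2 haI hbI ht10.le (by linarith : (0:ℝ) ≤ 1 - t1) (by ring)
        have h2 := hv.2 haI hbI ht20.le (by linarith : (0:ℝ) ≤ 1 - t2) (by ring)
        simp only [smul_eq_mul] at h1 h2
        rw [← hy1e] at h1
        rw [← hy2e] at h2
        have s1 := mul_le_mul_of_nonneg_left h1 hd1.le
        have s2 := mul_le_mul_of_nonneg_left h2 hd2.le
        linarith [s1, s2, heq]
    | · -- strict case
        have hne : a ≠ 1/2 := ne_of_gt (by linarith)
        have h1 := hv.2 haI hbI hne ht10 (by linarith : (0:ℝ) < 1 - t1) (by ring)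
        have h2 := hv.2 haI hbI hne ht20 (by linarith : (0:ℝ) < 1 - t2) (by ring)
        simp only [smul_eq_mul] at h1 h2
        rw [← hy1e] at h1
        rw [← hy2e] at h2
        have s1 := (mul_lt_mul_iff_right₀ hd1).2 h1
        have s2 := (mul_lt_mul_iff_right₀ hd2).2 h2
        linarith [s1, s2, heq]
  }
end
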